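/- arXiv:1501.05869 — 11 statements merged into one kernel-verified Lean document; each statement's English description precedes it below -/
import Mathlib

section
/- If T is a compact operator between complex Hilbert spaces H and K, then for every nontrivial closed subspace M of H, the restriction of T to M attains its norm on M. -/
/-!
Take a norming sequence `uₙ` in the closed unit ball of `M`. By compactness of `T`, a
subsequence has `T uₙ → y` with `‖y‖ = ‖T|_M‖`, so `‖uₘ + uₙ‖ → 2` once `T|_M ≠ 0`, because
`‖T|_M‖ ‖uₘ + uₙ‖ ≥ ‖T uₘ + T uₙ‖ → 2 ‖y‖`. Since a Hilbert space is uniformly convex, this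
forces `uₙ` to be Cauchy, and its limit is a unit vector at which `T|_M` attains its norm.
-/

open Filter Topology Metric

namespace ContinuousLinearMap

theorem exists_seq_norm_le_one_tendsto_opNorm {𝕜 E F : Type*} [DenselyNormedField 𝕜]
    [NormedAddCommGroup E] [NormedSpace 𝕜 E] [NormedAddCommGroup F] [NormedSpace 𝕜 F]
    (f : E →L[𝕜] F) :
    ∃ u : ℕ → E, (∀ n, ‖u n‖ ≤ 1) ∧ Tendsto (fun n => ‖f (u n)‖) atTop (𝓝 ‖f‖) := by
  have hnorming (n : ℕ) : ∃ x : E, ‖x‖ < 1 ∧ ‖f‖ - 1 / (n + 1) < ‖f x‖ :=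
    f.exists_lt_apply_of_lt_opNorm (sub_lt_self _ Nat.one_div_pos_of_nat)
  choose u hu_lt hu_norming using hnorming
  refine ⟨u, fun n => (hu_lt n).le, tendsto_of_tendsto_of_tendsto_of_le_of_le ?_
    tendsto_const_nhds (fun n => (hu_norming n).le) fun n => ?_⟩
  · simpa using (tendsto_const_nhds (x := ‖f‖)).sub tendsto_one_div_add_atTop_nhds_zero_nat
  · simpa using f.le_opNorm_of_le (hu_lt n).le

theorem tendsto_norm_add_of_tendsto_apply {𝕜 E F : Type*} [RCLike 𝕜]
    [NormedAddCommGroup E] [NormedSpace 𝕜 E] [NormedAddCommGroup F] [NormedSpace 𝕜 F]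
    {f : E →L[𝕜] F} (hf : f ≠ 0) {u : ℕ → E} (hu : ∀ n, ‖u n‖ ≤ 1)
    {y : F} (hy : ‖y‖ = ‖f‖) (hfu : Tendsto (f ∘ u) atTop (𝓝 y)) :
    Tendsto (fun p : ℕ × ℕ => ‖u p.1 + u p.2‖) (atTop ×ˢ atTop) (𝓝 2) := by
  have hf_pos : 0 < ‖f‖ := norm_pos_iff.2 hf
  have hsum : Tendsto (fun p : ℕ × ℕ => ‖f (u p.1 + u p.2)‖ / ‖f‖) (atTop ×ˢ atTop)
      (𝓝 (‖y + y‖ / ‖f‖)) := by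
    simp only [map_add]
    exact (((hfu.comp tendsto_fst).add (hfu.comp tendsto_snd)).norm).div_const _
  rw [← two_smul 𝕜 y, norm_smul, hy, RCLike.norm_two, mul_div_cancel_right₀ _ hf_pos.ne'] at hsum
  refine tendsto_of_tendsto_of_tendsto_of_le_of_le hsum tendsto_const_nhds (fun p => ?_)
    fun p => (norm_add_le_of_le (hu p.1) (hu p.2)).trans_eq one_add_one_eq_two
  rw [div_le_iff₀ hf_pos, mul_comm]
  exact f.le_opNorm _

end ContinuousLinearMap

theorem cauchySeq_of_tendsto_norm_add {E : Type*} [NormedAddCommGroup E] [NormedSpace ℝ E]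
    [UniformConvexSpace E] {u : ℕ → E} (hu : ∀ n, ‖u n‖ ≤ 1)
    (h : Tendsto (fun p : ℕ × ℕ => ‖u p.1 + u p.2‖) (atTop ×ˢ atTop) (𝓝 2)) :
    CauchySeq u := by
  refine Metric.cauchySeq_iff.2 fun ε hε => ?_
  obtain ⟨δ, hδ, hconvex⟩ := exists_forall_closed_ball_dist_add_le_two_sub E hε
  have hlarge := h.eventually (lt_mem_nhds (sub_lt_self 2 hδ))
  rw [prod_atTop_atTop_eq, eventually_atTop_prod_self'] at hlarge
  obtain ⟨N, hN⟩ := hlarge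
  refine ⟨N, fun m hm n hn => ?_⟩
  rw [dist_eq_norm]
  by_contra! hfar
  exact (hconvex (hu m) (hu n) hfar).not_gt (hN m hm n hn)

theorem IsCompactOperator.exists_norm_eq_one_norm_apply_eq_opNorm {𝕜 E F : Type*}
    [RCLike 𝕜] [NormedAddCommGroup E] [NormedSpace 𝕜 E] [NormedSpace ℝ E]
    [UniformConvexSpace E] [CompleteSpace E] [Nontrivial E]
    [NormedAddCommGroup F] [NormedSpace 𝕜 F] {f : E →L[𝕜] F} (hf : IsCompactOperator f) :
    ∃ x : E, ‖x‖ = 1 ∧ ‖f x‖ = ‖f‖ := by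
  obtain rfl | hf_ne := eq_or_ne f 0
  · obtain ⟨x, hx⟩ := exists_norm_eq E zero_le_one
    exact ⟨x, hx, by simp⟩
  obtain ⟨u, hu, hfu⟩ := f.exists_seq_norm_le_one_tendsto_opNorm
  obtain ⟨K, hK, hfK⟩ := hf.image_closedBall_subset_compact 1
  obtain ⟨y, -, φ, hφ, hy⟩ :=
    hK.tendsto_subseq fun n => hfK ⟨u n, mem_closedBall_zero_iff.2 (hu n), rfl⟩
  have hy_norm : ‖y‖ = ‖f‖ := tendsto_nhds_unique hy.norm (hfu.comp hφ.tendsto_atTop)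
  have hu_φ (n : ℕ) : ‖u (φ n)‖ ≤ 1 := hu (φ n)
  obtain ⟨x, hx⟩ := cauchySeq_tendsto_of_complete <| cauchySeq_of_tendsto_norm_add hu_φ
    (f.tendsto_norm_add_of_tendsto_apply hf_ne hu_φ hy_norm hy)
  have hfx : ‖f x‖ = ‖f‖ := by
    rw [tendsto_nhds_unique ((f.continuous.tendsto x).comp hx) hy, hy_norm]
  have hx_le : ‖x‖ ≤ 1 := le_of_tendsto' hx.norm hu_φ
  have hx_ge : 1 ≤ ‖x‖ :=
    (le_mul_iff_one_le_right (norm_pos_iff.2 hf_ne)).1 (hfx ▸ f.le_opNorm x)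
  exact ⟨x, hx_le.antisymm hx_ge, hfx⟩

theorem compact_is_absolutely_norming_general {H K : Type*}
    [NormedAddCommGroup H] [InnerProductSpace ℂ H] [CompleteSpace H]
    [NormedAddCommGroup K] [InnerProductSpace ℂ K]
    (T : H →L[ℂ] K) (hT : IsCompactOperator T) :
    ∀ M : Submodule ℂ H, IsClosed (M : Set H) → M ≠ ⊥ →
      ∃ x : H, x ∈ M ∧ ‖x‖ = 1 ∧ ‖T x‖ = ‖T.comp M.subtypeL‖ := by
  intro M hM hM_ne
  have : CompleteSpace M := hM.completeSpace_coe
  have : Nontrivial M := Submodule.nontrivial_iff_ne_bot.2 hM_ne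
  have : UniformConvexSpace M := by
    let := InnerProductSpace.rclikeToReal ℂ M
    infer_instance
  have hTM : IsCompactOperator (T.comp M.subtypeL) := hT.comp_clm M.subtypeL
  obtain ⟨x, hx, hTx⟩ := hTM.exists_norm_eq_one_norm_apply_eq_opNorm
  exact ⟨x, x.2, hx, hTx⟩

theorem compact_is_absolutely_norming {H K : Type*}
    [NormedAddCommGroup H] [InnerProductSpace ℂ H] [CompleteSpace H]
    [NormedAddCommGroup K] [InnerProductSpace ℂ K] [CompleteSpace K]
    (T : H →L[ℂ] K) (hT : IsCompactOperator T) :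
    ∀ M : Submodule ℂ H, IsClosed (M : Set H) → M ≠ ⊥ →
      ∃ x : H, x ∈ M ∧ ‖x‖ = 1 ∧ ‖T x‖ = ‖T.comp M.subtypeL‖ :=
  compact_is_absolutely_norming_general T hT
end

section
/- A self-adjoint bounded operator T on a complex Hilbert space H attains its norm on the unit sphere if and only if ‖T‖ or −‖T‖ is an eigenvalue of T. -/
/-! If `‖x‖ = 1` and `‖T x‖ = ‖T‖`, then `⟪T² x, x⟫ = ‖T x‖² = ‖T‖² ≥ ‖T² x‖`, so equality holds in
Cauchy–Schwarz and `T² x = ‖T‖² x`. Factoring `T² - ‖T‖² = (T - ‖T‖)(T + ‖T‖)`, either `x` is an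
eigenvector for `-‖T‖` or `T x + ‖T‖ x` is one for `‖T‖`. Conversely a normalized eigenvector for
`±‖T‖` attains the norm. -/

open scoped InnerProductSpace

section InnerProductSpace

variable {𝕜 E : Type*} [RCLike 𝕜] [NormedAddCommGroup E] [InnerProductSpace 𝕜 E]

theorem eq_ofReal_smul_of_inner_eq_of_norm_le {x y : E} {r : ℝ} (hx : ‖x‖ = 1) (hy : ‖y‖ ≤ r)
    (hyx : ⟪y, x⟫_𝕜 = r) : y = (r : 𝕜) • x := by
  have hr : ‖y‖ = r := by
    refine le_antisymm hy ?_
    calc r ≤ ‖(r : 𝕜)‖ := by rw [RCLike.norm_ofReal]; exact le_abs_self r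
      _ = ‖⟪y, x⟫_𝕜‖ := by rw [hyx]
      _ ≤ ‖y‖ := by simpa [hx] using norm_inner_le_norm (𝕜 := 𝕜) y x
  have hcs : ⟪y, x⟫_𝕜 = (‖y‖ : 𝕜) * ‖x‖ := by rw [hyx, hr, hx, RCLike.ofReal_one, mul_one]
  simpa [hx, hr] using inner_eq_norm_mul_iff.mp hcs

theorem ContinuousLinearMap.apply_apply_eq_sq_opNorm_smul {T : E →L[𝕜] E}
    (hT : (T : E →ₗ[𝕜] E).IsSymmetric) {x : E} (hx : ‖x‖ = 1) (hTx : ‖T x‖ = ‖T‖) :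
    T (T x) = ((‖T‖ ^ 2 : ℝ) : 𝕜) • x := by
  refine eq_ofReal_smul_of_inner_eq_of_norm_le hx ?_ ?_
  · calc ‖T (T x)‖ ≤ ‖T‖ * ‖T x‖ := T.le_opNorm _
      _ = ‖T‖ ^ 2 := by rw [hTx, sq]
  · have hsymm : ⟪T (T x), x⟫_𝕜 = ⟪T x, T x⟫_𝕜 := hT (T x) x
    rw [hsymm, inner_self_eq_norm_sq_to_K, hTx, RCLike.ofReal_pow]

end InnerProductSpace

theorem Module.End.hasEigenvalue_or_hasEigenvalue_neg_of_apply_apply_eq_sq_smul {R M : Type*}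
    [CommRing R] [AddCommGroup M] [Module R M] {f : Module.End R M} {c : R} {x : M} (hx : x ≠ 0)
    (hfx : f (f x) = c ^ 2 • x) : f.HasEigenvalue c ∨ f.HasEigenvalue (-c) := by
  by_cases hneg : f x + c • x = 0
  · refine Or.inr (hasEigenvalue_of_hasEigenvector ⟨mem_eigenspace_iff.mpr ?_, hx⟩)
    rw [neg_smul]
    exact eq_neg_of_add_eq_zero_left hneg
  · refine Or.inl (hasEigenvalue_of_hasEigenvector ⟨mem_eigenspace_iff.mpr ?_, hneg⟩)
    rw [map_add, map_smul, hfx, smul_add, smul_smul]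
    module

theorem Module.End.HasEigenvalue.exists_norm_eq_one_norm_apply_eq {𝕜 E : Type*} [RCLike 𝕜]
    [NormedAddCommGroup E] [NormedSpace 𝕜 E] {f : Module.End 𝕜 E} {μ : 𝕜} (hμ : f.HasEigenvalue μ) :
    ∃ x : E, ‖x‖ = 1 ∧ ‖f x‖ = ‖μ‖ := by
  obtain ⟨v, hv, hv0⟩ := hμ.exists_hasEigenvector
  have hunit : ‖(‖v‖ : 𝕜)⁻¹ • v‖ = 1 := norm_smul_inv_norm hv0
  refine ⟨(‖v‖ : 𝕜)⁻¹ • v, hunit, ?_⟩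
  rw [map_smul, mem_eigenspace_iff.mp hv, smul_comm, norm_smul, hunit, mul_one]

theorem selfAdjoint_norming_iff_eigenvalue {H : Type*}
    [NormedAddCommGroup H] [InnerProductSpace ℂ H] [CompleteSpace H]
    (T : H →L[ℂ] H) (hT : IsSelfAdjoint T) :
    (∃ x : H, ‖x‖ = 1 ∧ ‖T x‖ = ‖T‖) ↔
      (Module.End.HasEigenvalue (T : H →ₗ[ℂ] H) (‖T‖ : ℂ) ∨
       Module.End.HasEigenvalue (T : H →ₗ[ℂ] H) (-(‖T‖ : ℂ))) := by
  constructor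
  · rintro ⟨x, hx, hTx⟩
    have hx0 : x ≠ 0 := norm_ne_zero_iff.mp (by rw [hx]; exact one_ne_zero)
    have hsq := T.apply_apply_eq_sq_opNorm_smul hT.isSymmetric hx hTx
    push_cast at hsq
    exact Module.End.hasEigenvalue_or_hasEigenvalue_neg_of_apply_apply_eq_sq_smul hx0 hsq
  · rintro (hμ | hμ) <;> simpa using hμ.exists_norm_eq_one_norm_apply_eq
end

section
/- A positive bounded operator T on a complex Hilbert space attains its norm on the unit sphere if and only if ‖T‖ is an eigenvalue of T. -/
/-!
If `‖T x‖ = ‖T‖` with `‖x‖ = 1`, the positive operator `‖T‖² - T†T` has vanishing quadratic form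
at `x`, hence kills `x`; so `T² x = ‖T‖² x` when `T` is positive. Writing `y = T x - ‖T‖ x`, this
says `T y + ‖T‖ y = 0`, and pairing with `y` gives `re ⟪T y, y⟫ + ‖T‖ ‖y‖² = 0`, forcing `y = 0`.
-/

section

open RCLike ContinuousLinearMap
open scoped InnerProduct

variable {𝕜 E F : Type*} [RCLike 𝕜] [NormedAddCommGroup E] [InnerProductSpace 𝕜 E]

local notation "⟪" x ", " y "⟫" => inner 𝕜 x y

lemma LinearMap.IsSymmetric.re_inner_apply_add_smul {T : E →ₗ[𝕜] E} (hT : T.IsSymmetric)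
    (x y : E) (t : ℝ) :
    re ⟪T (x + (t : 𝕜) • y), x + (t : 𝕜) • y⟫
      = re ⟪T y, y⟫ * (t * t) + 2 * re ⟪T x, y⟫ * t + re ⟪T x, x⟫ := by
  have hsymm : re ⟪T y, x⟫ = re ⟪T x, y⟫ := by rw [hT y x, inner_re_symm]
  simp only [map_add, map_smul, inner_add_left, inner_add_right, inner_smul_left,
    inner_smul_right, conj_ofReal, re_ofReal_mul, hsymm]
  ring

/-- The quadratic `t ↦ re ⟪T (x + t T x), x + t T x⟫` is nonnegative and vanishes at `0`,
so its linear coefficient `2 ‖T x‖²` vanishes. -/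
lemma LinearMap.IsPositive.apply_eq_zero_of_re_inner_eq_zero {T : E →ₗ[𝕜] E}
    (hT : T.IsPositive) {x : E} (hx : re ⟪T x, x⟫ = 0) : T x = 0 := by
  have hquad (t : ℝ) : 0 ≤ re ⟪T (T x), T x⟫ * (t * t) + 2 * ‖T x‖ ^ 2 * t + 0 := by
    have := hT.re_inner_nonneg_left (x + (t : 𝕜) • T x)
    rwa [hT.isSymmetric.re_inner_apply_add_smul, hx, inner_self_eq_norm_sq] at this
  have hdisc := discrim_le_zero hquad
  rw [discrim, mul_zero, sub_zero] at hdisc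
  have : ‖T x‖ ^ 2 = 0 := by nlinarith [sq_nonneg (‖T x‖ ^ 2)]
  simpa using this

lemma LinearMap.IsPositive.apply_eq_of_apply_apply_eq {T : E →ₗ[𝕜] E} (hT : T.IsPositive)
    {c : ℝ} (hc : 0 ≤ c) {x : E} (hx : T (T x) = ((c ^ 2 : ℝ) : 𝕜) • x) :
    T x = (c : 𝕜) • x := by
  rcases hc.eq_or_lt with rfl | hc
  · have : ‖T x‖ ^ 2 = 0 := by
      rw [← inner_self_eq_norm_sq (𝕜 := 𝕜), hT.isSymmetric, hx]
      simp
    simpa using this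
  · set y := T x - (c : 𝕜) • x
    have hy : T y + (c : 𝕜) • y = 0 := by
      simp only [y, map_sub, map_smul, hx, smul_sub, smul_smul, ofReal_pow]
      rw [sq]
      abel
    have hre : re ⟪T y, y⟫ + c * ‖y‖ ^ 2 = 0 := by
      have := congrArg (fun z => re ⟪z, y⟫) hy
      simpa only [inner_add_left, inner_smul_left, conj_ofReal, map_add, re_ofReal_mul,
        inner_self_eq_norm_sq, inner_zero_left, map_zero] using this
    have : ‖y‖ ^ 2 = 0 := by nlinarith [hT.re_inner_nonneg_left y, sq_nonneg ‖y‖]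
    simpa [y, sub_eq_zero] using this

lemma Module.End.HasEigenvalue.exists_norm_eq_one_apply_eq {T : Module.End 𝕜 E} {μ : 𝕜}
    (h : T.HasEigenvalue μ) : ∃ x : E, ‖x‖ = 1 ∧ T x = μ • x := by
  obtain ⟨v, hv, hv0⟩ := h.exists_hasEigenvector
  exact ⟨_, norm_smul_inv_norm hv0,
    Module.End.mem_eigenspace_iff.mp (Submodule.smul_mem _ _ hv)⟩

variable [NormedAddCommGroup F] [InnerProductSpace 𝕜 F] [CompleteSpace E] [CompleteSpace F]

lemma ContinuousLinearMap.re_inner_norm_sq_smul_sub_adjoint_comp_self_apply (T : E →L[𝕜] F)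
    (x : E) :
    re ⟪(((‖T‖ ^ 2 : ℝ) : 𝕜) • (1 : E →L[𝕜] E) - T† ∘L T) x, x⟫
      = ‖T‖ ^ 2 * ‖x‖ ^ 2 - ‖T x‖ ^ 2 := by
  rw [sub_apply, inner_sub_left, map_sub, ← apply_norm_sq_eq_inner_adjoint_left, smul_apply,
    one_apply_eq_self, inner_smul_left, conj_ofReal, re_ofReal_mul, inner_self_eq_norm_sq]

lemma ContinuousLinearMap.isPositive_norm_sq_smul_sub_adjoint_comp_self (T : E →L[𝕜] F) :
    (((‖T‖ ^ 2 : ℝ) : 𝕜) • (1 : E →L[𝕜] E) - T† ∘L T).IsPositive := by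
  refine ⟨?_, fun x => ?_⟩
  · exact (isPositive_one.smul_of_nonneg (ofReal_nonneg.mpr (by positivity))).isSymmetric.sub
      (isPositive_adjoint_comp_self T).isSymmetric
  · rw [reApplyInnerSelf_apply, re_inner_norm_sq_smul_sub_adjoint_comp_self_apply, sub_nonneg,
      ← mul_pow]
    exact pow_le_pow_left₀ (norm_nonneg _) (T.le_opNorm x) 2

lemma ContinuousLinearMap.adjoint_comp_self_apply_eq_of_norm_apply_eq (T : E →L[𝕜] F) {x : E}
    (hx : ‖T x‖ = ‖T‖ * ‖x‖) : (T† ∘L T) x = ((‖T‖ ^ 2 : ℝ) : 𝕜) • x := by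
  have h := T.isPositive_norm_sq_smul_sub_adjoint_comp_self.toLinearMap
    |>.apply_eq_zero_of_re_inner_eq_zero (x := x)
    (by rw [coe_coe, re_inner_norm_sq_smul_sub_adjoint_comp_self_apply, hx]; ring)
  rwa [coe_coe, sub_apply, smul_apply, one_apply_eq_self, sub_eq_zero, eq_comm] at h

end

theorem positive_norming_iff_eigenvalue {H : Type*}
    [NormedAddCommGroup H] [InnerProductSpace ℂ H] [CompleteSpace H]
    (T : H →L[ℂ] H) (hT : T.IsPositive) :
    (∃ x : H, ‖x‖ = 1 ∧ ‖T x‖ = ‖T‖) ↔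
      Module.End.HasEigenvalue (T : H →ₗ[ℂ] H) (‖T‖ : ℂ) := by
  constructor
  · rintro ⟨x, hx, hTx⟩
    have hsq : T (T x) = ((‖T‖ ^ 2 : ℝ) : ℂ) • x := by
      simpa [hT.isSelfAdjoint.adjoint_eq] using
        T.adjoint_comp_self_apply_eq_of_norm_apply_eq (x := x) (by rw [hTx, hx, mul_one])
    have hx0 : x ≠ 0 := norm_ne_zero_iff.mp (by simp [hx])
    exact Module.End.hasEigenvalue_of_hasEigenvector
      ⟨Module.End.mem_eigenspace_iff.mpr (hT.toLinearMap.apply_eq_of_apply_apply_eq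
        (norm_nonneg T) hsq), hx0⟩
  · intro h
    obtain ⟨x, hx, hTx⟩ := h.exists_norm_eq_one_apply_eq
    refine ⟨x, hx, ?_⟩
    rw [show T x = (‖T‖ : ℂ) • x from hTx, norm_smul, hx, Complex.norm_real, norm_norm, mul_one]
end

section
/- For a bounded operator T between complex Hilbert spaces H and K, T attains its norm on the unit sphere if and only if T*T attains its norm on the unit sphere. -/
/-!
Both directions compare `‖T x‖ ^ 2 = re ⟪T† T x, x⟫ ≤ ‖T† T x‖` with `‖T† T x‖ ≤ ‖T‖ ‖T x‖`
for a unit vector `x`, using the C⋆-identity `‖T† T‖ = ‖T‖ ^ 2`.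
-/

open ContinuousLinearMap

namespace ContinuousLinearMap

def AttainsNorm {𝕜 E F : Type*} [NontriviallyNormedField 𝕜]
    [SeminormedAddCommGroup E] [NormedSpace 𝕜 E] [SeminormedAddCommGroup F] [NormedSpace 𝕜 F]
    (T : E →L[𝕜] F) : Prop :=
  ∃ x : E, ‖x‖ = 1 ∧ ‖T x‖ = ‖T‖

variable {𝕜 E F : Type*} [RCLike 𝕜]
  [NormedAddCommGroup E] [InnerProductSpace 𝕜 E] [CompleteSpace E]
  [NormedAddCommGroup F] [InnerProductSpace 𝕜 F] [CompleteSpace F]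

theorem norm_apply_sq_le_norm_adjoint_comp_self_apply_mul (T : E →L[𝕜] F) (x : E) :
    ‖T x‖ ^ 2 ≤ ‖(adjoint T ∘L T) x‖ * ‖x‖ := by
  rw [apply_norm_sq_eq_inner_adjoint_left]
  exact re_inner_le_norm _ _

theorem norm_adjoint_comp_self_apply_le (T : E →L[𝕜] F) (x : E) :
    ‖(adjoint T ∘L T) x‖ ≤ ‖T‖ * ‖T x‖ := by
  calc ‖(adjoint T ∘L T) x‖ = ‖adjoint T (T x)‖ := rfl
    _ ≤ ‖adjoint T‖ * ‖T x‖ := le_opNorm _ _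
    _ = ‖T‖ * ‖T x‖ := by rw [LinearIsometryEquiv.norm_map]

theorem AttainsNorm.adjoint_comp_self {T : E →L[𝕜] F} (hT : T.AttainsNorm) :
    (adjoint T ∘L T).AttainsNorm := by
  obtain ⟨x, hx, hTx⟩ := hT
  refine ⟨x, hx, le_antisymm (by simpa [hx] using le_opNorm (adjoint T ∘L T) x) ?_⟩
  calc ‖adjoint T ∘L T‖ = ‖T x‖ ^ 2 := by rw [norm_adjoint_comp_self, hTx, sq]
    _ ≤ ‖(adjoint T ∘L T) x‖ := by
      simpa [hx] using norm_apply_sq_le_norm_adjoint_comp_self_apply_mul T x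

theorem AttainsNorm.of_adjoint_comp_self {T : E →L[𝕜] F} (hT : (adjoint T ∘L T).AttainsNorm) :
    T.AttainsNorm := by
  obtain ⟨x, hx, hTx⟩ := hT
  have hle : ‖T x‖ ≤ ‖T‖ := by simpa [hx] using le_opNorm T x
  refine ⟨x, hx, le_antisymm hle ?_⟩
  have hsq : ‖T‖ * ‖T‖ ≤ ‖T‖ * ‖T x‖ := by
    rw [← norm_adjoint_comp_self, ← hTx]
    exact norm_adjoint_comp_self_apply_le T x
  rcases (norm_nonneg T).eq_or_lt with hzero | hpos
  · rw [← hzero]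
    exact norm_nonneg _
  · exact le_of_mul_le_mul_left hsq hpos

end ContinuousLinearMap

theorem norming_iff_adjoint_comp_norming {H K : Type*}
    [NormedAddCommGroup H] [InnerProductSpace ℂ H] [CompleteSpace H]
    [NormedAddCommGroup K] [InnerProductSpace ℂ K] [CompleteSpace K]
    (T : H →L[ℂ] K) :
    (∃ x : H, ‖x‖ = 1 ∧ ‖T x‖ = ‖T‖) ↔
      (∃ x : H, ‖x‖ = 1 ∧
        ‖(ContinuousLinearMap.adjoint T ∘L T) x‖ = ‖ContinuousLinearMap.adjoint T ∘L T‖) :=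
  ⟨AttainsNorm.adjoint_comp_self, AttainsNorm.of_adjoint_comp_self⟩
end

section
/- For a bounded operator T between complex Hilbert spaces, T attains its norm on the unit sphere if and only if ‖T‖ is an eigenvalue of |T| = √(T*T). -/
/-!
Since `S` is self-adjoint, `S ∘ S = T† ∘ T` gives `‖S x‖ = ‖T x‖` for every `x`, hence `‖S‖ = ‖T‖`,
so `T` attains its norm at `x` exactly when `S` does. If `‖S x‖ = ‖S‖ ‖x‖`, expanding
`‖S (S x) - ‖S‖² x‖²` shows that it vanishes, so `S² x = ‖S‖² x`. Then `y = S x - ‖S‖ x` satisfies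
`S y = -‖S‖ y`, and positivity of `S` forces `y = 0` when `‖S‖ > 0`.
-/

open ContinuousLinearMap RCLike
open scoped InnerProductSpace

section

variable {𝕜 E F G : Type*} [RCLike 𝕜]

theorem ContinuousLinearMap.exists_norm_eq_one_and_norm_apply_eq_iff
    [NormedAddCommGroup E] [NormedSpace 𝕜 E] [NormedAddCommGroup F] [NormedSpace 𝕜 F]
    (f : E →L[𝕜] F) (c : ℝ) :
    (∃ x : E, ‖x‖ = 1 ∧ ‖f x‖ = c) ↔ ∃ x : E, x ≠ 0 ∧ ‖f x‖ = c * ‖x‖ := by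
  constructor
  · rintro ⟨x, hx, hfx⟩
    exact ⟨x, norm_ne_zero_iff.mp (by simp [hx]), by simp [hx, hfx]⟩
  · rintro ⟨x, hx, hfx⟩
    refine ⟨(‖x‖⁻¹ : 𝕜) • x, norm_smul_inv_norm hx, ?_⟩
    have : ‖x‖ ≠ 0 := norm_ne_zero_iff.mpr hx
    rw [map_smul, norm_smul, hfx, norm_inv, norm_ofReal, abs_norm]
    field_simp

variable [NormedAddCommGroup E] [InnerProductSpace 𝕜 E]

theorem ContinuousLinearMap.norm_apply_eq_of_adjoint_comp_self_eq
    [NormedAddCommGroup F] [InnerProductSpace 𝕜 F] [NormedAddCommGroup G] [InnerProductSpace 𝕜 G]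
    [CompleteSpace E] [CompleteSpace F] [CompleteSpace G] {S : E →L[𝕜] F} {T : E →L[𝕜] G}
    (h : adjoint S ∘L S = adjoint T ∘L T) (x : E) : ‖S x‖ = ‖T x‖ := by
  have hsq : ‖S x‖ ^ 2 = ‖T x‖ ^ 2 := by
    rw [apply_norm_sq_eq_inner_adjoint_left, apply_norm_sq_eq_inner_adjoint_left, h]
  exact (pow_left_inj₀ (norm_nonneg _) (norm_nonneg _) two_ne_zero).mp hsq

theorem LinearMap.IsSymmetric.apply_apply_eq_of_norm_apply_eq {S : E →L[𝕜] E}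
    (hS : (S : E →ₗ[𝕜] E).IsSymmetric) {x : E} (hx : ‖S x‖ = ‖S‖ * ‖x‖) :
    S (S x) = ((‖S‖ : 𝕜) ^ 2) • x := by
  have hle : ‖S (S x)‖ ≤ ‖S‖ ^ 2 * ‖x‖ :=
    calc ‖S (S x)‖ ≤ ‖S‖ * ‖S x‖ := S.le_opNorm _
      _ = ‖S‖ ^ 2 * ‖x‖ := by rw [hx]; ring
  have hre : re ⟪S (S x), x⟫_𝕜 = ‖S‖ ^ 2 * ‖x‖ ^ 2 := by
    rw [show ⟪S (S x), x⟫_𝕜 = ⟪S x, S x⟫_𝕜 from hS (S x) x, inner_self_eq_norm_sq (𝕜 := 𝕜), hx]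
    ring
  have hsq : ‖S (S x) - ((‖S‖ : 𝕜) ^ 2) • x‖ ^ 2 ≤ 0 := by
    rw [norm_sub_sq (𝕜 := 𝕜), inner_smul_right, ← ofReal_pow, re_ofReal_mul, hre, norm_smul,
      norm_ofReal, abs_of_nonneg (by positivity)]
    nlinarith [norm_nonneg (S (S x)), norm_nonneg x, norm_nonneg S]
  rw [← sub_eq_zero, ← norm_eq_zero]
  exact pow_eq_zero_iff two_ne_zero |>.mp (le_antisymm hsq (by positivity))

namespace ContinuousLinearMap.IsPositive

variable {S : E →L[𝕜] E} (hS : S.IsPositive)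
include hS

theorem eq_zero_of_apply_eq_neg_smul {r : ℝ} (hr : 0 < r) {y : E} (hy : S y = -(r : 𝕜) • y) :
    y = 0 := by
  have hre := hS.re_inner_nonneg_left y
  rw [hy, inner_smul_left, map_neg, conj_ofReal, neg_mul, map_neg, re_ofReal_mul,
    inner_self_eq_norm_sq] at hre
  have : ‖y‖ ^ 2 ≤ 0 := by nlinarith
  exact norm_eq_zero.mp (pow_eq_zero_iff two_ne_zero |>.mp (le_antisymm this (by positivity)))

theorem apply_eq_smul_of_apply_apply_eq {r : ℝ} (hr : 0 < r) {x : E}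
    (hx : S (S x) = ((r : 𝕜) ^ 2) • x) : S x = (r : 𝕜) • x := by
  refine sub_eq_zero.mp (hS.eq_zero_of_apply_eq_neg_smul hr ?_)
  rw [map_sub, map_smul, hx]
  module

theorem apply_eq_opNorm_smul_of_norm_apply_eq {x : E} (hx : ‖S x‖ = ‖S‖ * ‖x‖) :
    S x = (‖S‖ : 𝕜) • x := by
  rcases (norm_nonneg S).eq_or_lt with h0 | hpos
  · rw [← h0, ofReal_zero, zero_smul, ← norm_eq_zero, hx, ← h0, zero_mul]
  · exact hS.apply_eq_smul_of_apply_apply_eq hpos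
      (hS.isSymmetric.apply_apply_eq_of_norm_apply_eq hx)

theorem hasEigenvalue_opNorm_iff :
    Module.End.HasEigenvalue (S : E →ₗ[𝕜] E) (‖S‖ : 𝕜) ↔ ∃ x : E, x ≠ 0 ∧ ‖S x‖ = ‖S‖ * ‖x‖ := by
  simp only [Module.End.hasEigenvalue_iff, Submodule.ne_bot_iff, Module.End.mem_eigenspace_iff,
    coe_coe]
  constructor
  · rintro ⟨x, hSx, hx⟩
    exact ⟨x, hx, by rw [hSx, norm_smul, norm_ofReal, abs_norm]⟩
  · rintro ⟨x, hx, hSx⟩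
    exact ⟨x, hS.apply_eq_opNorm_smul_of_norm_apply_eq hSx, hx⟩

end ContinuousLinearMap.IsPositive

end

theorem norming_iff_norm_eigenvalue_of_absT {H K : Type*}
    [NormedAddCommGroup H] [InnerProductSpace ℂ H] [CompleteSpace H]
    [NormedAddCommGroup K] [InnerProductSpace ℂ K] [CompleteSpace K]
    (T : H →L[ℂ] K) (S : H →L[ℂ] H) (hS : S.IsPositive)
    (hS2 : S ∘L S = ContinuousLinearMap.adjoint T ∘L T) :
    (∃ x : H, ‖x‖ = 1 ∧ ‖T x‖ = ‖T‖) ↔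
      Module.End.HasEigenvalue (S : H →ₗ[ℂ] H) (‖T‖ : ℂ) := by
  have hnorm : ∀ x, ‖S x‖ = ‖T x‖ :=
    norm_apply_eq_of_adjoint_comp_self_eq (by rw [hS.isSelfAdjoint.adjoint_eq, hS2])
  rw [T.exists_norm_eq_one_and_norm_apply_eq_iff, ← opNorm_ext S T hnorm]
  simp_rw [← hnorm]
  exact hS.hasEigenvalue_opNorm_iff.symm
end

section
/- If T is a positive bounded operator on a complex Hilbert space H that is absolutely norming (its restriction to every nonzero closed subspace attains its norm on that subspace), then H has an orthonormal basis consisting of eigenvectors of T. -/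
/-!
By Zorn's lemma take a maximal orthonormal set `V` of eigenvectors of `T`. Its orthogonal
complement `M` is closed and `T`-invariant, so if `M ≠ 0` the norming property gives a unit
`x ∈ M` with `‖T x‖ = ‖T|_M‖ =: c`. Then `‖T² x‖ ≤ c² = ⟪T² x, x⟫`, which forces `T² x = c² x`,
i.e. `(T - c)(T + c) x = 0`; positivity makes `T + c` injective for `c > 0`, so
`T x + c x ∈ M` is an eigenvector, contradicting maximality. Hence `M = 0` and `V` is a Hilbert
basis.
-/

open Submodule Module.End
open scoped InnerProductSpace

variable {𝕜 E : Type*} [RCLike 𝕜] [NormedAddCommGroup E] [InnerProductSpace 𝕜 E]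

theorem Orthonormal.insert_of_mem_orthogonal {V : Set E}
    (hV : Orthonormal 𝕜 (Subtype.val : V → E)) {e : E} (he : ‖e‖ = 1)
    (heV : e ∈ (span 𝕜 V)ᗮ) : Orthonormal 𝕜 (Subtype.val : ↥(insert e V) → E) := by
  classical
  have hVe : ∀ v ∈ V, ⟪v, e⟫_𝕜 = 0 := fun v hv => inner_right_of_mem_orthogonal (subset_span hv) heV
  have he_notMem : e ∉ V := fun h => by
    simp [inner_self_eq_zero.mp (hVe e h)] at he
  rw [orthonormal_subtype_iff_ite] at hV ⊢
  rintro v (rfl | hv) w (rfl | hw)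
  · simp [inner_self_eq_norm_sq_to_K, he]
  · rw [if_neg (by rintro rfl; exact he_notMem hw), inner_eq_zero_symm, hVe w hw]
  · rw [if_neg (by rintro rfl; exact he_notMem hv), hVe v hv]
  · exact hV v hv w hw

theorem exists_hilbertBasis_mem_of_forall_orthogonal [CompleteSpace E] (S : Set E)
    (hS : ∀ V ⊆ S, (span 𝕜 V)ᗮ ≠ ⊥ → ∃ e ∈ S, ‖e‖ = 1 ∧ e ∈ (span 𝕜 V)ᗮ) :
    ∃ (V : Set E) (b : HilbertBasis V 𝕜 E), ∀ i, b i ∈ S := by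
  obtain ⟨V, hmax⟩ := zorn_subset {V | V ⊆ S ∧ Orthonormal 𝕜 (Subtype.val : V → E)}
    fun c hc hchain => ⟨⋃₀ c, ⟨Set.sUnion_subset fun s hs => (hc hs).1,
      orthonormal_sUnion_of_directed hchain.directedOn fun s hs => (hc hs).2⟩,
      fun _ => Set.subset_sUnion_of_mem⟩
  obtain ⟨hVS, hV⟩ := hmax.prop
  have hbot : (span 𝕜 V)ᗮ = ⊥ := by
    by_contra hne
    obtain ⟨e, heS, he, heV⟩ := hS V hVS hne
    have heV' : e ∈ V := (hmax.eq_of_subset ⟨Set.insert_subset heS hVS,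
      hV.insert_of_mem_orthogonal he heV⟩ (Set.subset_insert e V)) ▸ Set.mem_insert e V
    have he0 : e = 0 := inner_self_eq_zero.mp (inner_right_of_mem_orthogonal (subset_span heV') heV)
    simp [he0] at he
  exact ⟨V, .mkOfOrthogonalEqBot hV (by rwa [Subtype.range_coe]), fun i => by simpa using hVS i.2⟩

theorem LinearMap.IsSymmetric.apply_apply_eq_of_norm_le {T : E →ₗ[𝕜] E} (hT : T.IsSymmetric)
    {x : E} (hx : ‖x‖ = 1) (h : ‖T (T x)‖ ≤ ‖T x‖ ^ 2) :
    T (T x) = ((‖T x‖ ^ 2 : ℝ) : 𝕜) • x := by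
  set c : ℝ := ‖T x‖ ^ 2
  have hre : RCLike.re ⟪T (T x), (c : 𝕜) • x⟫_𝕜 = c * c := by
    rw [inner_smul_right, RCLike.re_ofReal_mul, hT, inner_self_eq_norm_sq (𝕜 := 𝕜)]
  have hsq : ‖T (T x) - (c : 𝕜) • x‖ ^ 2 ≤ 0 := by
    rw [norm_sub_sq (𝕜 := 𝕜), hre, norm_smul, RCLike.norm_ofReal, hx,
      abs_of_nonneg (by positivity)]
    nlinarith [norm_nonneg (T (T x))]
  exact sub_eq_zero.mp (norm_eq_zero.mp (by nlinarith [norm_nonneg (T (T x) - (c : 𝕜) • x)]))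

theorem LinearMap.IsPositive.apply_add_smul_ne_zero {T : E →ₗ[𝕜] E} (hT : T.IsPositive)
    {c : ℝ} (hc : 0 < c) {x : E} (hx : x ≠ 0) : T x + (c : 𝕜) • x ≠ 0 := by
  intro h
  have hre : RCLike.re ⟪T x + (c : 𝕜) • x, x⟫_𝕜 = RCLike.re ⟪T x, x⟫_𝕜 + c * ‖x‖ ^ 2 := by
    rw [inner_add_left, inner_smul_left, map_add, RCLike.conj_ofReal, RCLike.re_ofReal_mul,
      inner_self_eq_norm_sq (𝕜 := 𝕜)]
  rw [h, inner_zero_left, map_zero] at hre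
  have := hT.re_inner_nonneg_left x
  have := mul_pos hc (pow_pos (norm_pos_iff.mpr hx) 2)
  linarith

theorem ContinuousLinearMap.IsPositive.exists_eigenvector_of_norm_attained {T : E →L[𝕜] E}
    (hT : T.IsPositive) {M : Submodule 𝕜 E} (hM : M ∈ invtSubmodule (T : E →ₗ[𝕜] E))
    {x : E} (hxM : x ∈ M) (hx : ‖x‖ = 1) (hattain : ‖T x‖ = ‖T.comp M.subtypeL‖) :
    ∃ e ∈ M, ‖e‖ = 1 ∧ ∃ μ : 𝕜, T e = μ • e := by
  rw [mem_invtSubmodule_iff_forall_mem_of_mem] at hM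
  set c := ‖T x‖
  rcases (norm_nonneg (T x)).eq_or_lt with hc | hc
  · exact ⟨x, hxM, hx, 0, by rw [zero_smul, ← norm_eq_zero, ← hc]⟩
  have hTTx : T (T x) = ((c ^ 2 : ℝ) : 𝕜) • x := by
    refine hT.isSymmetric.apply_apply_eq_of_norm_le hx ?_
    calc ‖T (T x)‖ ≤ ‖T.comp M.subtypeL‖ * ‖T x‖ :=
          (T.comp M.subtypeL).le_opNorm ⟨T x, hM x hxM⟩
      _ = c ^ 2 := by rw [← hattain, sq]
  set y := T x + (c : 𝕜) • x
  have hyM : y ∈ M := M.add_mem (hM x hxM) (M.smul_mem _ hxM)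
  have hy : y ≠ 0 := hT.toLinearMap.apply_add_smul_ne_zero hc (norm_ne_zero_iff.mp (by simp [hx]))
  have hTy : T y = (c : 𝕜) • y := by
    simp only [y, map_add, map_smul, hTTx, RCLike.ofReal_pow]
    module
  refine ⟨(‖y‖⁻¹ : 𝕜) • y, M.smul_mem _ hyM, norm_smul_inv_norm hy, c, ?_⟩
  rw [map_smul, hTy, smul_comm]

theorem IsSelfAdjoint.orthogonal_span_mem_invtSubmodule [CompleteSpace E] {T : E →L[𝕜] E}
    (hT : IsSelfAdjoint T) {V : Set E} (hV : ∀ v ∈ V, ∃ μ : 𝕜, T v = μ • v) :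
    (span 𝕜 V)ᗮ ∈ invtSubmodule (T : E →ₗ[𝕜] E) := by
  refine ContinuousLinearMap.orthogonal_mem_invtSubmodule ?_
  rw [hT.adjoint_eq, mem_invtSubmodule, span_le]
  intro v hv
  obtain ⟨μ, hμ⟩ := hV v hv
  simpa [hμ] using smul_mem _ μ (subset_span hv)

theorem positive_AN_has_eigenbasis {H : Type u}
    [NormedAddCommGroup H] [InnerProductSpace ℂ H] [CompleteSpace H]
    (T : H →L[ℂ] H) (hT : T.IsPositive)
    (hAN : ∀ M : Submodule ℂ H, IsClosed (M : Set H) → M ≠ ⊥ →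
      ∃ x : H, x ∈ M ∧ ‖x‖ = 1 ∧ ‖T x‖ = ‖T.comp M.subtypeL‖) :
    ∃ (ι : Type u) (b : HilbertBasis ι ℂ H), ∀ i : ι, ∃ μ : ℂ, T (b i) = μ • b i := by
  obtain ⟨V, b, hb⟩ := exists_hilbertBasis_mem_of_forall_orthogonal
    {e : H | ∃ μ : ℂ, T e = μ • e} fun V hV hne => by
      obtain ⟨x, hxM, hx, hattain⟩ := hAN _ (isClosed_orthogonal _) hne
      obtain ⟨e, heM, he, heig⟩ := hT.exists_eigenvector_of_norm_attained
        (hT.isSelfAdjoint.orthogonal_span_mem_invtSubmodule hV) hxM hx hattain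
      exact ⟨e, heig, he, heM⟩
  exact ⟨V, b, hb⟩
end

section
/- If T is a positive absolutely norming operator on a complex Hilbert space, diagonalized by an orthonormal basis {v_α}_{α∈Λ} with Tv_α = β_α v_α, then for every nonempty subset Γ ⊆ Λ, the supremum of {β_α : α ∈ Γ} is attained, i.e. sup{β_α : α ∈ Γ} = max{β_α : α ∈ Γ}. -/
/-!
Let `M` be the closed span of `{b i | i ∈ Γ}` and `s = ‖T|_M‖`, so `β j ≤ s` on `Γ`. Property AN
gives a unit vector `x ∈ M` with `‖T x‖ = s`. Since `T` acts diagonally on coefficients,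
Parseval gives `∑ β i ^ 2 |xᵢ|² = s² = ∑ s² |xᵢ|²`, the coefficients `xᵢ` vanishing off `Γ`; as
`β i ≤ s` termwise, `β i = s` wherever `xᵢ ≠ 0`, and such an `i` exists because `‖x‖ = 1`.
-/
open scoped InnerProductSpace

theorem eq_of_hasSum_mul_of_le {ι : Type*} {w a : ι → ℝ} {W s : ℝ} (hw : HasSum w W)
    (haw : HasSum (fun i => a i * w i) (s * W)) (hw₀ : ∀ i, 0 ≤ w i)
    (has : ∀ i, w i ≠ 0 → a i ≤ s) {i : ι} (hi : w i ≠ 0) : a i = s := by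
  have hgap : HasSum (fun j => (s - a j) * w j) 0 := by
    simpa only [sub_mul, sub_self] using (hw.mul_left s).sub haw
  have hgap₀ : ∀ j, 0 ≤ (s - a j) * w j := fun j => by
    by_cases hj : w j = 0
    · simp [hj]
    · exact mul_nonneg (sub_nonneg.2 (has j hj)) (hw₀ j)
  have := congr_fun ((hasSum_zero_iff_of_nonneg hgap₀).1 hgap) i
  simpa [sub_eq_zero, hi, eq_comm] using this

namespace HilbertBasis

variable {ι 𝕜 E : Type*} [RCLike 𝕜] [NormedAddCommGroup E] [InnerProductSpace 𝕜 E]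
  (b : HilbertBasis ι 𝕜 E)

theorem hasSum_norm_repr_sq (x : E) : HasSum (fun i => ‖b.repr x i‖ ^ 2) (‖x‖ ^ 2) := by
  simpa only [ENNReal.toReal_ofNat, Real.rpow_two, LinearIsometryEquiv.norm_map] using
    lp.hasSum_norm (p := 2) (by norm_num) (b.repr x)

theorem repr_apply_of_apply_eq_smul {T : E →L[𝕜] E} {β : ι → 𝕜}
    (hT : ∀ i, T (b i) = β i • b i) (x : E) (i : ι) :
    b.repr (T x) i = β i * b.repr x i := by
  classical
  have hsum := ((b.hasSum_repr x).mapL T).mapL (innerSL 𝕜 (b i))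
  have hterms : (fun j => innerSL 𝕜 (b i) (T (b.repr x j • b j)))
      = Pi.single i (β i * b.repr x i) := by
    funext j
    rw [map_smul, hT, smul_smul, innerSL_apply_apply, inner_smul_right,
      orthonormal_iff_ite.1 b.orthonormal, Pi.single_apply]
    by_cases hij : j = i
    · subst hij; simp [mul_comm]
    · simp [hij, Ne.symm hij]
  rw [hterms] at hsum
  rw [b.repr_apply_apply, ← hsum.unique (hasSum_pi_single i _), innerSL_apply_apply]

theorem hasSum_norm_sq_mul_norm_repr_sq {T : E →L[𝕜] E} {β : ι → 𝕜}
    (hT : ∀ i, T (b i) = β i • b i) (x : E) :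
    HasSum (fun i => ‖β i‖ ^ 2 * ‖b.repr x i‖ ^ 2) (‖T x‖ ^ 2) := by
  simpa only [b.repr_apply_of_apply_eq_smul hT, norm_mul, mul_pow] using
    b.hasSum_norm_repr_sq (T x)

theorem repr_apply_eq_zero_of_mem_closure_span {Γ : Set ι} {x : E}
    (hx : x ∈ (Submodule.span 𝕜 (b '' Γ)).topologicalClosure) {i : ι} (hi : i ∉ Γ) :
    b.repr x i = 0 := by
  have hle : (Submodule.span 𝕜 (b '' Γ)).topologicalClosure ≤ (innerSL 𝕜 (b i)).ker := by
    refine Submodule.topologicalClosure_minimal _ ?_ (innerSL 𝕜 (b i)).isClosed_ker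
    rw [Submodule.span_le]
    rintro _ ⟨j, hj, rfl⟩
    exact b.orthonormal.2 (ne_of_mem_of_not_mem hj hi).symm
  simpa [b.repr_apply_apply] using hle hx

end HilbertBasis

theorem positive_AN_sup_eq_max_general {H : Type*} {ι : Type*}
    [NormedAddCommGroup H] [InnerProductSpace ℂ H] [CompleteSpace H]
    (T : H →L[ℂ] H)
    (hAN : ∀ M : Submodule ℂ H, IsClosed (M : Set H) → M ≠ ⊥ →
      ∃ x : H, x ∈ M ∧ ‖x‖ = 1 ∧ ‖T x‖ = ‖T.comp M.subtypeL‖)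
    (b : HilbertBasis ι ℂ H) (β : ι → ℝ) (hβ : ∀ i, 0 ≤ β i)
    (hb : ∀ i, T (b i) = (β i : ℂ) • b i) :
    ∀ Γ : Set ι, Γ.Nonempty → ∃ i ∈ Γ, ∀ j ∈ Γ, β j ≤ β i := by
  rintro Γ ⟨i₀, hi₀⟩
  set M := (Submodule.span ℂ (b '' Γ)).topologicalClosure
  have hbM : ∀ j ∈ Γ, b j ∈ M := fun j hj =>
    Submodule.le_topologicalClosure _ (Submodule.subset_span ⟨j, hj, rfl⟩)
  have hM : M ≠ ⊥ := fun h => b.orthonormal.ne_zero i₀ <| by simpa [h] using hbM i₀ hi₀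
  obtain ⟨x, hxM, hx, hTx⟩ := hAN M (Submodule.isClosed_topologicalClosure _) hM
  set s := ‖T.comp M.subtypeL‖
  have hs₀ : 0 ≤ s := norm_nonneg (T.comp M.subtypeL)
  have hβs : ∀ j ∈ Γ, β j ≤ s := fun j hj => by
    simpa [hb, norm_smul, abs_of_nonneg (hβ j), b.orthonormal.1 j] using
      (T.comp M.subtypeL).le_opNorm ⟨b j, hbM j hj⟩
  have hnorm : ∀ i, ‖(β i : ℂ)‖ ^ 2 = β i ^ 2 := fun i => by simp [abs_of_nonneg (hβ i)]
  have hsq := b.hasSum_norm_sq_mul_norm_repr_sq hb x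
  simp only [hnorm, hTx] at hsq
  have hunit := b.hasSum_norm_repr_sq x
  rw [hx, one_pow] at hunit
  have hsupp : ∀ j, ‖b.repr x j‖ ^ 2 ≠ 0 → j ∈ Γ := fun j hj => by
    by_contra hjΓ
    simp [b.repr_apply_eq_zero_of_mem_closure_span hxM hjΓ] at hj
  obtain ⟨i, hi⟩ : ∃ i, ‖b.repr x i‖ ^ 2 ≠ 0 := by
    by_contra! h
    exact one_ne_zero (hunit.unique (by simp [h]))
  have hβi : β i = s := (pow_left_inj₀ (hβ i) hs₀ two_ne_zero).1 <|
    eq_of_hasSum_mul_of_le hunit (by simpa using hsq) (fun _ => by positivity)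
      (fun j hj => pow_le_pow_left₀ (hβ j) (hβs j (hsupp j hj)) 2) hi
  exact ⟨i, hsupp i hi, fun j hj => hβi ▸ hβs j hj⟩

theorem positive_AN_sup_eq_max {H : Type*} {ι : Type*}
    [NormedAddCommGroup H] [InnerProductSpace ℂ H] [CompleteSpace H]
    (T : H →L[ℂ] H) (hT : T.IsPositive)
    (hAN : ∀ M : Submodule ℂ H, IsClosed (M : Set H) → M ≠ ⊥ →
      ∃ x : H, x ∈ M ∧ ‖x‖ = 1 ∧ ‖T x‖ = ‖T.comp M.subtypeL‖)
    (b : HilbertBasis ι ℂ H) (β : ι → ℝ) (hβ : ∀ i, 0 ≤ β i)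
    (hb : ∀ i, T (b i) = (β i : ℂ) • b i) :
    ∀ Γ : Set ι, Γ.Nonempty → ∃ i ∈ Γ, ∀ j ∈ Γ, β j ≤ β i :=
  positive_AN_sup_eq_max_general T hAN b β hβ hb
end

section
/- If T is a positive absolutely norming operator on a complex Hilbert space, then the set of distinct eigenvalues of T is countable. -/
/-!
Eigenvalues of a positive operator `T` are real and nonnegative. If `T` is moreover absolutely
norming, every nonempty set `s` of eigenvalues has a greatest element. Otherwise let `M` be the
closed span of the eigenspaces of the eigenvalues in `s`, and `x ∈ M` a unit vector at which `T`
attains its norm on `M`. Then `x` is an eigenvector of `(T|_M)† T|_M` with eigenvalue `‖T|_M‖²`,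
which exceeds the square of every eigenvalue in `s`; so `x` is orthogonal to all these
eigenspaces, hence to `M`, and `x = 0`. Finally, in a set of reals each of whose nonempty subsets
has a greatest element, every point is isolated from the left, and such a set is countable.
-/

open Module.End Set InnerProductSpace

namespace ContinuousLinearMap

variable {𝕜 E F : Type*} [RCLike 𝕜] [NormedAddCommGroup E] [InnerProductSpace 𝕜 E]
  [NormedAddCommGroup F] [InnerProductSpace 𝕜 F]

def AbsolutelyNorming (T : E →L[𝕜] F) : Prop :=
  ∀ M : Submodule 𝕜 E, IsClosed (M : Set E) → M ≠ ⊥ →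
    ∃ x : E, x ∈ M ∧ ‖x‖ = 1 ∧ ‖T x‖ = ‖T.comp M.subtypeL‖

/-- A unit vector at which `B` attains its norm maximizes the Rayleigh quotient of `B† B`. -/
theorem adjoint_apply_apply_eq_of_norm_apply_eq [CompleteSpace E] [CompleteSpace F]
    (B : E →L[𝕜] F) {x : E} (hx : ‖x‖ = 1) (hBx : ‖B x‖ = ‖B‖) :
    adjoint B (B x) = ((‖B‖ ^ 2 : ℝ) : 𝕜) • x := by
  have hmax : IsMaxOn (adjoint B ∘L B).reApplyInnerSelf (Metric.sphere 0 ‖x‖) x := by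
    intro y hy
    rw [hx, mem_sphere_zero_iff_norm] at hy
    simp only [Set.mem_ofPred_eq, reApplyInnerSelf, ← apply_norm_sq_eq_inner_adjoint_left, hBx]
    gcongr
    simpa [hy] using B.le_opNorm y
  have := (isPositive_adjoint_comp_self B).isSelfAdjoint.eq_smul_self_of_isLocalExtrOn
    (Or.inr hmax.localize)
  rwa [rayleighQuotient, reApplyInnerSelf, ← apply_norm_sq_eq_inner_adjoint_left, hx, hBx,
    one_pow, div_one] at this

theorem norm_le_opNorm_comp_subtypeL_of_apply_eq_smul (T : E →L[𝕜] E) {M : Submodule 𝕜 E}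
    {v : E} (hvM : v ∈ M) (hv : v ≠ 0) {c : 𝕜} (hTv : T v = c • v) :
    ‖c‖ ≤ ‖T ∘L M.subtypeL‖ := by
  have := (T ∘L M.subtypeL).ratio_le_opNorm ⟨v, hvM⟩
  rwa [comp_apply, Submodule.subtypeL_apply, hTv, norm_smul, Submodule.coe_norm,
    mul_div_cancel_right₀ _ (norm_ne_zero_iff.mpr hv)] at this

end ContinuousLinearMap

namespace IsSelfAdjoint

variable {𝕜 E : Type*} [RCLike 𝕜] [NormedAddCommGroup E] [InnerProductSpace 𝕜 E]
  [CompleteSpace E]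

theorem inner_eq_zero_of_norm_attained {T : E →L[𝕜] E} (hT : IsSelfAdjoint T)
    {M : Submodule 𝕜 E} [CompleteSpace M] {x v : E} (hxM : x ∈ M) (hx : ‖x‖ = 1)
    (hTx : ‖T x‖ = ‖T ∘L M.subtypeL‖) (hvM : v ∈ M) {r : ℝ} (hTv : T v = (r : 𝕜) • v)
    (hr : |r| < ‖T ∘L M.subtypeL‖) : ⟪v, x⟫_𝕜 = 0 := by
  set B := T ∘L M.subtypeL
  have hB := B.adjoint_apply_apply_eq_of_norm_apply_eq (x := ⟨x, hxM⟩) hx hTx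
  have hnorm : ⟪T v, T x⟫_𝕜 = ((‖B‖ ^ 2 : ℝ) : 𝕜) * ⟪v, x⟫_𝕜 :=
    calc ⟪T v, T x⟫_𝕜 = ⟪B ⟨v, hvM⟩, B ⟨x, hxM⟩⟫_𝕜 := rfl
      _ = ⟪(⟨v, hvM⟩ : M), ContinuousLinearMap.adjoint B (B ⟨x, hxM⟩)⟫_𝕜 :=
        (ContinuousLinearMap.adjoint_inner_right _ _ _).symm
      _ = ((‖B‖ ^ 2 : ℝ) : 𝕜) * ⟪v, x⟫_𝕜 := by rw [hB, inner_smul_right]; rfl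
  have heigen : ⟪T v, T x⟫_𝕜 = ((r ^ 2 : ℝ) : 𝕜) * ⟪v, x⟫_𝕜 := by
    rw [← hT.isSymmetric.apply_clm, hTv, map_smul, hTv, smul_smul, inner_smul_left]
    simp [sq]
  have hne : ((‖B‖ ^ 2 : ℝ) : 𝕜) ≠ ((r ^ 2 : ℝ) : 𝕜) := by
    rw [Ne, RCLike.ofReal_inj]
    exact (sq_lt_sq' (by linarith [neg_abs_le r]) (lt_of_abs_lt hr)).ne'
  exact (mul_eq_mul_right_iff.mp (hnorm.symm.trans heigen)).resolve_left hne

end IsSelfAdjoint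

namespace ContinuousLinearMap.IsPositive

variable {𝕜 E : Type*} [RCLike 𝕜] [NormedAddCommGroup E] [InnerProductSpace 𝕜 E]
  [CompleteSpace E]

theorem exists_isGreatest_of_absolutelyNorming {T : E →L[𝕜] E} (hT : T.IsPositive)
    (hAN : T.AbsolutelyNorming) {s : Set ℝ} (hs : s.Nonempty)
    (hev : ∀ r ∈ s, HasEigenvalue (T : E →ₗ[𝕜] E) r) : ∃ a, IsGreatest s a := by
  by_contra! hno
  have hup : ∀ r ∈ s, ∃ r' ∈ s, r < r' := fun r hr => by
    simpa [IsGreatest, upperBounds, hr] using hno r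
  set K := ⨆ r ∈ s, eigenspace (T : E →ₗ[𝕜] E) r
  set M := K.topologicalClosure
  have hKM : ∀ r ∈ s, eigenspace (T : E →ₗ[𝕜] E) r ≤ M := fun r hr =>
    (le_iSup₂_of_le r hr le_rfl).trans K.le_topologicalClosure
  obtain ⟨r₀, hr₀⟩ := hs
  obtain ⟨v₀, hv₀⟩ := (hev r₀ hr₀).exists_hasEigenvector
  obtain ⟨x, hxM, hx, hTx⟩ := hAN M K.isClosed_topologicalClosure
    ((Submodule.ne_bot_iff M).mpr ⟨v₀, hKM r₀ hr₀ hv₀.1, hv₀.2⟩)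
  have hKx : K ≤ (𝕜 ∙ x)ᗮ := iSup₂_le fun r hr v hv => by
    obtain ⟨r', hr', hrr'⟩ := hup r hr
    obtain ⟨w, hw⟩ := (hev r' hr').exists_hasEigenvector
    have hr'M := T.norm_le_opNorm_comp_subtypeL_of_apply_eq_smul (hKM r' hr' hw.1) hw.2
      (mem_eigenspace_iff.mp hw.1)
    have hr0 : 0 ≤ r := eigenvalue_nonneg_of_nonneg (hev r hr) hT.re_inner_nonneg_right
    rw [Submodule.mem_orthogonal_singleton_iff_inner_right, inner_eq_zero_symm]
    refine hT.isSelfAdjoint.inner_eq_zero_of_norm_attained hxM hx hTx (hKM r hr hv)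
      (mem_eigenspace_iff.mp hv) ?_
    rw [abs_of_nonneg hr0]
    exact hrr'.trans_le ((le_abs_self r').trans (by simpa using hr'M))
  have hxx := K.topologicalClosure_minimal hKx (Submodule.isClosed_orthogonal _) hxM
  rw [Submodule.mem_orthogonal_singleton_iff_inner_right, inner_self_eq_zero] at hxx
  simp [hxx] at hx

end ContinuousLinearMap.IsPositive

theorem Set.countable_of_forall_exists_isGreatest {α : Type*} [LinearOrder α] [TopologicalSpace α]
    [OrderTopology α] [SecondCountableTopology α] {s : Set α}
    (h : ∀ t ⊆ s, t.Nonempty → ∃ a, IsGreatest t a) : s.Countable := by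
  refine (countable_setOfPred_isolated_left_within (s := s)).mono fun r hr => And.intro hr ?_
  rcases (s ∩ Iio r).eq_empty_or_nonempty with he | hne
  · rw [he, nhdsWithin_empty]
  obtain ⟨a, ⟨-, har⟩, ha⟩ := h _ inter_subset_left hne
  rw [← notMem_closure_iff_nhdsWithin_eq_bot]
  exact fun hr' => not_le_of_gt har (closure_minimal ha isClosed_Iic hr')

theorem positive_AN_countable_eigenvalues {H : Type*}
    [NormedAddCommGroup H] [InnerProductSpace ℂ H] [CompleteSpace H]
    (T : H →L[ℂ] H) (hT : T.IsPositive)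
    (hAN : ∀ M : Submodule ℂ H, IsClosed (M : Set H) → M ≠ ⊥ →
      ∃ x : H, x ∈ M ∧ ‖x‖ = 1 ∧ ‖T x‖ = ‖T.comp M.subtypeL‖) :
    Set.Countable {μ : ℂ | Module.End.HasEigenvalue (T : H →ₗ[ℂ] H) μ} := by
  have hreal : {r : ℝ | HasEigenvalue (T : H →ₗ[ℂ] H) r}.Countable :=
    Set.countable_of_forall_exists_isGreatest fun t ht hne =>
      hT.exists_isGreatest_of_absolutelyNorming hAN hne fun r hr => ht hr
  refine (hreal.image ((↑) : ℝ → ℂ)).mono fun μ hμ => ?_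
  obtain ⟨r, rfl⟩ := Complex.conj_eq_iff_real.mp (hT.isSymmetric.conj_eigenvalue_eq_self hμ)
  exact ⟨r, hμ, rfl⟩
end

section
/- If T is a positive absolutely norming operator on a complex Hilbert space, then T has at most one eigenvalue of infinite multiplicity (i.e., at most one eigenvalue whose eigenspace is infinite dimensional). -/
/-!
Suppose `T` has two eigenvalues `0 ≤ μ < ν` of infinite multiplicity, and pick orthonormal
sequences `uₙ` in `ker (T - μ)` and `vₙ` in `ker (T - ν)`. The closed span `M` of the tilted
vectors `wₙ = aₙ uₙ + vₙ`, with `aₙ > 0` and `aₙ → 0`, lies in `ker (T - μ) ⊕ ker (T - ν)`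
(closed, being `ker ((T - μ)(T - ν))`), so `‖T x‖ ≤ ν ‖x‖` on `M` with equality only on
`ker (T - ν)`; as `‖T wₙ‖ / ‖wₙ‖ → ν`, `‖T|_M‖ = ν`. But `M ∩ ker (T - ν) = 0`: the vectors
`uₙ - aₙ vₙ` are orthogonal to `M`, so a vector of `M` orthogonal to every `uₙ` is orthogonal
to every `vₙ`, hence to `M` itself. Thus `T|_M` does not attain its norm.
-/

open Module.End Submodule Filter Topology
open scoped InnerProductSpace

section InnerProductSpace

variable {𝕜 E : Type*} [RCLike 𝕜] [NormedAddCommGroup E] [InnerProductSpace 𝕜 E]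

theorem norm_smul_add_smul_sq {x y : E} (h : ⟪x, y⟫_𝕜 = 0) (a b : 𝕜) :
    ‖a • x + b • y‖ ^ 2 = ‖a‖ ^ 2 * ‖x‖ ^ 2 + ‖b‖ ^ 2 * ‖y‖ ^ 2 := by
  have := norm_add_sq_eq_norm_sq_add_norm_sq_of_inner_eq_zero (a • x) (b • y)
    (by rw [inner_smul_left, inner_smul_right, h, mul_zero, mul_zero])
  rw [sq, this, norm_smul, norm_smul]
  ring

theorem inner_eq_zero_of_mem_closure_span {s : Set E} {z x : E} (h : ∀ y ∈ s, ⟪z, y⟫_𝕜 = 0)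
    (hx : x ∈ (span 𝕜 s).topologicalClosure) : ⟪z, x⟫_𝕜 = 0 := by
  have hker : span 𝕜 s ≤ (innerSL 𝕜 z).ker := by
    rw [span_le]
    intro y hy
    simpa using h y hy
  simpa using (span 𝕜 s).topologicalClosure_minimal hker (innerSL 𝕜 z).isClosed_ker hx

theorem exists_orthonormal_nat_of_not_finiteDimensional (h : ¬ FiniteDimensional 𝕜 E) :
    ∃ u : ℕ → E, Orthonormal 𝕜 u := by
  let b := Module.Basis.ofVectorSpace 𝕜 E
  have : Infinite (Module.Basis.ofVectorSpaceIndex 𝕜 E) :=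
    not_finite_iff_infinite.mp fun _ => h (Module.Finite.of_basis b)
  exact ⟨_, InnerProductSpace.gramSchmidtNormed_orthonormal
    (b.linearIndependent.comp _ (Infinite.natEmbedding _).injective)⟩

theorem Submodule.exists_orthonormal_nat_of_not_finiteDimensional (K : Submodule 𝕜 E)
    (h : ¬ FiniteDimensional 𝕜 K) : ∃ u : ℕ → E, Orthonormal 𝕜 u ∧ ∀ n, u n ∈ K := by
  obtain ⟨u, hu⟩ := _root_.exists_orthonormal_nat_of_not_finiteDimensional h
  exact ⟨fun n => u n, hu.comp_linearIsometry K.subtypeₗᵢ, fun n => (u n).2⟩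

theorem LinearMap.IsSymmetric.mem_eigenspace_of_mem_sup_of_norm_le {T : E →ₗ[𝕜] E}
    (hT : T.IsSymmetric) {μ ν : 𝕜} (hμν : ‖μ‖ < ‖ν‖) {x : E}
    (hx : x ∈ eigenspace T μ ⊔ eigenspace T ν) (hTx : ‖ν‖ * ‖x‖ ≤ ‖T x‖) :
    x ∈ eigenspace T ν := by
  obtain ⟨p, hp, q, hq, rfl⟩ := mem_sup.mp hx
  have hpq : ⟪p, q⟫_𝕜 = 0 :=
    hT.orthogonalFamily_eigenspaces (ne_of_apply_ne _ hμν.ne) ⟨p, hp⟩ ⟨q, hq⟩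
  have hnorm : ‖p + q‖ ^ 2 = ‖p‖ ^ 2 + ‖q‖ ^ 2 := by
    simpa using norm_smul_add_smul_sq hpq (1 : 𝕜) 1
  have hTnorm : ‖T (p + q)‖ ^ 2 = ‖μ‖ ^ 2 * ‖p‖ ^ 2 + ‖ν‖ ^ 2 * ‖q‖ ^ 2 := by
    rw [map_add, mem_eigenspace_iff.mp hp, mem_eigenspace_iff.mp hq]
    exact norm_smul_add_smul_sq hpq μ ν
  have hp0 : ‖p‖ ^ 2 = 0 := by
    have := pow_le_pow_left₀ (by positivity) hTx 2
    rw [mul_pow, hTnorm, hnorm] at this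
    have hsq : ‖μ‖ ^ 2 < ‖ν‖ ^ 2 := pow_lt_pow_left₀ hμν (norm_nonneg μ) two_ne_zero
    nlinarith [mul_le_mul_of_nonneg_right hsq.le (sq_nonneg ‖p‖), sq_nonneg ‖p‖]
  rw [norm_eq_zero.mp (pow_eq_zero_iff two_ne_zero |>.mp hp0), zero_add]
  exact hq

theorem ContinuousLinearMap.IsPositive.exists_nonneg_ofReal_of_hasEigenvalue {T : E →L[𝕜] E}
    (hT : T.IsPositive) {μ : 𝕜} (hμ : HasEigenvalue (T : E →ₗ[𝕜] E) μ) :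
    ∃ r : ℝ, 0 ≤ r ∧ μ = r := by
  obtain ⟨r, rfl⟩ := RCLike.conj_eq_iff_real.mp (hT.isSymmetric.conj_eigenvalue_eq_self hμ)
  exact ⟨r, eigenvalue_nonneg_of_nonneg hμ hT.re_inner_nonneg_right, rfl⟩

end InnerProductSpace

theorem eigenspace_sup_eigenspace {K E : Type*} [Field K] [AddCommGroup E] [Module K E]
    (T : Module.End K E) {μ ν : K} (h : μ ≠ ν) :
    eigenspace T μ ⊔ eigenspace T ν = LinearMap.ker ((T - μ • 1) * (T - ν • 1)) := by
  have := Polynomial.sup_ker_aeval_eq_ker_aeval_mul_of_coprime T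
    (Polynomial.isCoprime_X_sub_C_of_isUnit_sub (sub_ne_zero.mpr h).isUnit)
  simpa [eigenspace_def, Algebra.algebraMap_eq_smul_one] using this

theorem isClosed_eigenspace_sup_eigenspace {𝕜 E : Type*} [NontriviallyNormedField 𝕜]
    [NormedAddCommGroup E] [NormedSpace 𝕜 E] (T : E →L[𝕜] E) {μ ν : 𝕜} (h : μ ≠ ν) :
    IsClosed ((eigenspace (T : E →ₗ[𝕜] E) μ ⊔ eigenspace (T : E →ₗ[𝕜] E) ν :
      Submodule 𝕜 E) : Set E) := by
  rw [eigenspace_sup_eigenspace _ h]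
  exact ((T - μ • 1) * (T - ν • 1)).isClosed_ker

section TiltedSpan

variable {𝕜 E : Type*} [RCLike 𝕜] [NormedAddCommGroup E] [InnerProductSpace 𝕜 E]

variable (𝕜) in
def tiltedSpan (a : ℕ → ℝ) (u v : ℕ → E) : Submodule 𝕜 E :=
  (span 𝕜 (Set.range fun n => (a n : 𝕜) • u n + v n)).topologicalClosure

variable {a : ℕ → ℝ} {u v : ℕ → E}

theorem eq_zero_of_mem_tiltedSpan (hu : Orthonormal 𝕜 u) (hv : Orthonormal 𝕜 v)
    (huv : ∀ m n, ⟪u m, v n⟫_𝕜 = 0) (ha : ∀ n, a n ≠ 0) {x : E} (hx : x ∈ tiltedSpan 𝕜 a u v)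
    (hux : ∀ n, ⟪u n, x⟫_𝕜 = 0) : x = 0 := by
  have hvx (n : ℕ) : ⟪v n, x⟫_𝕜 = 0 := by
    have hz : ⟪u n - (a n : 𝕜) • v n, x⟫_𝕜 = 0 := by
      refine inner_eq_zero_of_mem_closure_span ?_ hx
      rintro _ ⟨m, rfl⟩
      have hvu : ⟪v n, u m⟫_𝕜 = 0 := inner_eq_zero_symm.mp (huv m n)
      simp only [inner_sub_left, inner_add_right, inner_smul_left, inner_smul_right,
        RCLike.conj_ofReal, huv, hvu, orthonormal_iff_ite.mp hu, orthonormal_iff_ite.mp hv]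
      split_ifs with hmn <;> simp [hmn]
    simpa [inner_sub_left, inner_smul_left, hux n, ha n] using hz
  have hxx : ⟪x, x⟫_𝕜 = 0 := by
    refine inner_eq_zero_of_mem_closure_span ?_ hx
    rintro _ ⟨n, rfl⟩
    rw [inner_eq_zero_symm]
    simp [inner_add_left, inner_smul_left, hux n, hvx n]
  exact inner_self_eq_zero.mp hxx

theorem norm_le_norm_comp_subtypeL_tiltedSpan (hu : Orthonormal 𝕜 u) (hv : Orthonormal 𝕜 v)
    (huv : ∀ m n, ⟪u m, v n⟫_𝕜 = 0) (ha : Tendsto a atTop (𝓝 0)) {T : E →L[𝕜] E} {μ ν : 𝕜}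
    (hTu : ∀ n, T (u n) = μ • u n) (hTv : ∀ n, T (v n) = ν • v n) :
    ‖ν‖ ≤ ‖T.comp (tiltedSpan 𝕜 a u v).subtypeL‖ := by
  set c := ‖T.comp (tiltedSpan 𝕜 a u v).subtypeL‖
  have hbound (n : ℕ) : a n ^ 2 * ‖μ‖ ^ 2 + ‖ν‖ ^ 2 ≤ c ^ 2 * (a n ^ 2 + 1) := by
    have hw : (a n : 𝕜) • u n + v n ∈ tiltedSpan 𝕜 a u v :=
      le_topologicalClosure _ (subset_span ⟨n, rfl⟩)
    have hle := (T.comp (tiltedSpan 𝕜 a u v).subtypeL).le_opNorm ⟨_, hw⟩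
    have hTw : T ((a n : 𝕜) • u n + v n) = ((a n : 𝕜) * μ) • u n + ν • v n := by
      rw [map_add, map_smul, hTu, hTv, smul_smul]
    have hw2 := norm_smul_add_smul_sq (huv n n) (a n : 𝕜) 1
    have hTw2 := norm_smul_add_smul_sq (huv n n) ((a n : 𝕜) * μ) ν
    simp only [one_smul, norm_one, one_pow, norm_mul, RCLike.norm_ofReal, mul_pow, sq_abs,
      hu.1 n, hv.1 n, mul_one] at hw2 hTw2
    change ‖T ((a n : 𝕜) • u n + v n)‖ ≤ c * ‖(a n : 𝕜) • u n + v n‖ at hle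
    rw [← hTw2, ← hw2, ← hTw, ← mul_pow]
    exact pow_le_pow_left₀ (norm_nonneg _) hle 2
  have hlim : ‖ν‖ ^ 2 ≤ c ^ 2 := by
    refine le_of_tendsto_of_tendsto' (b := atTop) ?_ ?_ hbound
    · simpa using ((ha.pow 2).mul_const (‖μ‖ ^ 2)).add_const (‖ν‖ ^ 2)
    · simpa using ((ha.pow 2).add_const 1).const_mul (c ^ 2)
  exact (pow_le_pow_iff_left₀ (norm_nonneg _) (norm_nonneg _) two_ne_zero).mp hlim

end TiltedSpan

def ContinuousLinearMap.AttainsNormOn {𝕜 E F : Type*} [NontriviallyNormedField 𝕜]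
    [SeminormedAddCommGroup E] [NormedSpace 𝕜 E] [SeminormedAddCommGroup F] [NormedSpace 𝕜 F]
    (T : E →L[𝕜] F) (M : Submodule 𝕜 E) : Prop :=
  ∃ x ∈ M, ‖x‖ = 1 ∧ ‖T x‖ = ‖T.comp M.subtypeL‖

theorem LinearMap.IsSymmetric.exists_not_attainsNormOn {𝕜 E : Type*} [RCLike 𝕜]
    [NormedAddCommGroup E] [InnerProductSpace 𝕜 E] {T : E →L[𝕜] E}
    (hT : (T : E →ₗ[𝕜] E).IsSymmetric) {μ ν : 𝕜} (hμν : ‖μ‖ ≠ ‖ν‖)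
    (hμ : ¬ FiniteDimensional 𝕜 (eigenspace (T : E →ₗ[𝕜] E) μ))
    (hν : ¬ FiniteDimensional 𝕜 (eigenspace (T : E →ₗ[𝕜] E) ν)) :
    ∃ M : Submodule 𝕜 E, IsClosed (M : Set E) ∧ M ≠ ⊥ ∧ ¬ T.AttainsNormOn M := by
  wlog hlt : ‖μ‖ < ‖ν‖ generalizing μ ν
  · exact this hμν.symm hν hμ (hμν.symm.lt_of_le (not_lt.mp hlt))
  have hne : μ ≠ ν := ne_of_apply_ne _ hlt.ne
  obtain ⟨u, hu, huE⟩ := (eigenspace _ μ).exists_orthonormal_nat_of_not_finiteDimensional hμ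
  obtain ⟨v, hv, hvE⟩ := (eigenspace _ ν).exists_orthonormal_nat_of_not_finiteDimensional hν
  have huv (m n : ℕ) : ⟪u m, v n⟫_𝕜 = 0 :=
    hT.orthogonalFamily_eigenspaces hne ⟨_, huE m⟩ ⟨_, hvE n⟩
  let a : ℕ → ℝ := fun n => 1 / ((n : ℝ) + 1)
  have hM_le : tiltedSpan 𝕜 a u v ≤
      eigenspace (T : E →ₗ[𝕜] E) μ ⊔ eigenspace (T : E →ₗ[𝕜] E) ν := by
    refine topologicalClosure_minimal _ ?_ (isClosed_eigenspace_sup_eigenspace T hne)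
    rw [span_le, Set.range_subset_iff]
    exact fun n => add_mem (mem_sup_left (smul_mem _ _ (huE n))) (mem_sup_right (hvE n))
  have hnorm : ‖ν‖ ≤ ‖T.comp (tiltedSpan 𝕜 a u v).subtypeL‖ :=
    norm_le_norm_comp_subtypeL_tiltedSpan hu hv huv tendsto_one_div_add_atTop_nhds_zero_nat
      (fun n => mem_eigenspace_iff.mp (huE n)) (fun n => mem_eigenspace_iff.mp (hvE n))
  refine ⟨tiltedSpan 𝕜 a u v, isClosed_closure, fun hM => ?_, ?_⟩
  · have : Subsingleton (tiltedSpan 𝕜 a u v) := by rw [hM]; infer_instance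
    rw [ContinuousLinearMap.opNorm_subsingleton] at hnorm
    exact hlt.not_ge (hnorm.trans (norm_nonneg μ))
  · rintro ⟨x, hxM, hx1, hTx⟩
    have hxν : x ∈ eigenspace (T : E →ₗ[𝕜] E) ν :=
      hT.mem_eigenspace_of_mem_sup_of_norm_le hlt (hM_le hxM)
        (by rw [hx1, mul_one]; exact hnorm.trans_eq hTx.symm)
    have hx0 : x = 0 := eq_zero_of_mem_tiltedSpan hu hv huv (fun n => by positivity) hxM
      fun n => hT.orthogonalFamily_eigenspaces hne ⟨_, huE n⟩ ⟨x, hxν⟩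
    simp [hx0] at hx1

theorem positive_AN_at_most_one_infinite_multiplicity_general {H : Type*}
    [NormedAddCommGroup H] [InnerProductSpace ℂ H]
    (T : H →L[ℂ] H) (hT : T.IsPositive)
    (hAN : ∀ M : Submodule ℂ H, IsClosed (M : Set H) → M ≠ ⊥ →
      ∃ x : H, x ∈ M ∧ ‖x‖ = 1 ∧ ‖T x‖ = ‖T.comp M.subtypeL‖) :
    ∀ μ ν : ℂ,
      Module.End.HasEigenvalue (T : H →ₗ[ℂ] H) μ →
      ¬ FiniteDimensional ℂ (Module.End.eigenspace (T : H →ₗ[ℂ] H) μ) →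
      Module.End.HasEigenvalue (T : H →ₗ[ℂ] H) ν →
      ¬ FiniteDimensional ℂ (Module.End.eigenspace (T : H →ₗ[ℂ] H) ν) →
      μ = ν := by
  intro μ ν hμ hμinf hν hνinf
  obtain ⟨r, hr, rfl⟩ := hT.exists_nonneg_ofReal_of_hasEigenvalue hμ
  obtain ⟨s, hs, rfl⟩ := hT.exists_nonneg_ofReal_of_hasEigenvalue hν
  by_contra hne
  have hrs : ‖(r : ℂ)‖ ≠ ‖(s : ℂ)‖ := by
    rwa [Complex.norm_of_nonneg hr, Complex.norm_of_nonneg hs, ← Complex.ofReal_inj.ne]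
  obtain ⟨M, hMc, hM0, hM⟩ := hT.isSymmetric.exists_not_attainsNormOn hrs hμinf hνinf
  exact hM (hAN M hMc hM0)

theorem positive_AN_at_most_one_infinite_multiplicity {H : Type*}
    [NormedAddCommGroup H] [InnerProductSpace ℂ H] [CompleteSpace H]
    (T : H →L[ℂ] H) (hT : T.IsPositive)
    (hAN : ∀ M : Submodule ℂ H, IsClosed (M : Set H) → M ≠ ⊥ →
      ∃ x : H, x ∈ M ∧ ‖x‖ = 1 ∧ ‖T x‖ = ‖T.comp M.subtypeL‖) :
    ∀ μ ν : ℂ,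
      Module.End.HasEigenvalue (T : H →ₗ[ℂ] H) μ →
      ¬ FiniteDimensional ℂ (Module.End.eigenspace (T : H →ₗ[ℂ] H) μ) →
      Module.End.HasEigenvalue (T : H →ₗ[ℂ] H) ν →
      ¬ FiniteDimensional ℂ (Module.End.eigenspace (T : H →ₗ[ℂ] H) ν) →
      μ = ν :=
  positive_AN_at_most_one_infinite_multiplicity_general T hT hAN
end

section
/- If T is a diagonalizable bounded operator on a complex Hilbert space with respect to an orthonormal basis B of eigenvectors, and T attains its norm on the unit sphere, then T attains its norm at some basis vector v₀ ∈ B, equivalently ‖T‖ = max over α of |λ_α| where λ_α are the eigenvalues. -/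
/-!
In coordinates, `‖T x‖² = ∑ |λᵢ|² |⟪bᵢ, x⟫|²` is an average of the numbers `|λᵢ|² ≤ ‖T‖²` with
weights `|⟪bᵢ, x⟫|²` summing to `‖x‖² = 1`. If it equals `‖T‖²`, every `λᵢ` with positive weight
has `|λᵢ| = ‖T‖`, and some weight is positive.
-/

open scoped InnerProductSpace

theorem eq_of_hasSum_mul_eq_of_le {ι : Type*} {a m : ι → ℝ} {M s : ℝ}
    (ha : ∀ i, 0 ≤ a i) (hm : ∀ i, m i ≤ M) (hs : HasSum a s)
    (hms : HasSum (fun i => m i * a i) (M * s)) {i₀ : ι} (hi₀ : a i₀ ≠ 0) : m i₀ = M := by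
  by_contra hne
  have hlt : m i₀ * a i₀ < M * a i₀ :=
    mul_lt_mul_of_pos_right (lt_of_le_of_ne (hm i₀) hne) (lt_of_le_of_ne (ha i₀) hi₀.symm)
  exact lt_irrefl _ <| hasSum_lt (fun i => mul_le_mul_of_nonneg_right (hm i) (ha i)) hlt hms
    (hs.mul_left M)

namespace HilbertBasis

variable {ι 𝕜 E : Type*} [RCLike 𝕜] [NormedAddCommGroup E] [InnerProductSpace 𝕜 E]

theorem hasSum_norm_inner_sq (b : HilbertBasis ι 𝕜 E) (x : E) :
    HasSum (fun i => ‖⟪b i, x⟫_𝕜‖ ^ 2) (‖x‖ ^ 2) := by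
  have h := lp.hasSum_norm (p := 2) (by norm_num) (b.repr x)
  simpa only [ENNReal.toReal_ofNat, Real.rpow_two, b.repr_apply_apply,
    LinearIsometryEquiv.norm_map] using h

theorem exists_inner_ne_zero (b : HilbertBasis ι 𝕜 E) {x : E} (hx : x ≠ 0) :
    ∃ i, ⟪b i, x⟫_𝕜 ≠ 0 := by
  by_contra! h
  exact hx (b.repr.map_eq_zero_iff.1 (lp.ext (funext fun i => by simp [b.repr_apply_apply, h i])))

theorem inner_apply_of_apply_eq_smul (b : HilbertBasis ι 𝕜 E) {T : E →L[𝕜] E} {lam : ι → 𝕜}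
    (hb : ∀ i, T (b i) = lam i • b i) (i : ι) (x : E) :
    ⟪b i, T x⟫_𝕜 = lam i * ⟪b i, x⟫_𝕜 := by
  suffices (innerSL 𝕜 (b i)).comp T = lam i • innerSL 𝕜 (b i) from DFunLike.congr_fun this x
  refine ContinuousLinearMap.ext_on
    (Submodule.dense_iff_topologicalClosure_eq_top.2 b.dense_span) ?_
  rintro _ ⟨j, rfl⟩
  obtain rfl | hij := eq_or_ne i j
  · simp [hb]
  · simp [hb, b.orthonormal.inner_eq_zero hij]

end HilbertBasis

theorem diagonalizable_norming_attains_at_basis_vector_general {H : Type*} {ι : Type*}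
    [NormedAddCommGroup H] [InnerProductSpace ℂ H]
    (T : H →L[ℂ] H) (b : HilbertBasis ι ℂ H) (lam : ι → ℂ)
    (hb : ∀ i, T (b i) = lam i • b i)
    (hN : ∃ x : H, ‖x‖ = 1 ∧ ‖T x‖ = ‖T‖) :
    ∃ i₀ : ι, ‖T (b i₀)‖ = ‖T‖ ∧ ∀ i, ‖lam i‖ ≤ ‖lam i₀‖ := by
  obtain ⟨x, hx, hTx⟩ := hN
  have hTb : ∀ i, ‖T (b i)‖ = ‖lam i‖ := fun i => by
    rw [hb, norm_smul, b.orthonormal.1 i, mul_one]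
  have hle : ∀ i, ‖lam i‖ ≤ ‖T‖ := fun i =>
    hTb i ▸ T.unit_le_opNorm _ (b.orthonormal.1 i).le
  obtain ⟨i₀, hi₀⟩ := b.exists_inner_ne_zero (norm_ne_zero_iff.1 (hx ▸ one_ne_zero))
  have hsq : ‖lam i₀‖ ^ 2 = ‖T‖ ^ 2 :=
    eq_of_hasSum_mul_eq_of_le (a := fun i => ‖⟪b i, x⟫_ℂ‖ ^ 2) (s := 1) (fun _ => by positivity)
      (fun i => pow_le_pow_left₀ (norm_nonneg _) (hle i) 2)
      (by simpa [hx] using b.hasSum_norm_inner_sq x)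
      (by simpa [hTx, b.inner_apply_of_apply_eq_smul hb, mul_pow] using
        b.hasSum_norm_inner_sq (T x))
      (pow_ne_zero 2 (norm_ne_zero_iff.2 hi₀))
  have hi₀T : ‖lam i₀‖ = ‖T‖ := (pow_left_inj₀ (norm_nonneg _) (norm_nonneg _) two_ne_zero).1 hsq
  exact ⟨i₀, (hTb i₀).trans hi₀T, fun i => hi₀T ▸ hle i⟩

theorem diagonalizable_norming_attains_at_basis_vector {H : Type*} {ι : Type*}
    [NormedAddCommGroup H] [InnerProductSpace ℂ H] [CompleteSpace H]
    (T : H →L[ℂ] H) (b : HilbertBasis ι ℂ H) (lam : ι → ℂ)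
    (hb : ∀ i, T (b i) = lam i • b i)
    (hN : ∃ x : H, ‖x‖ = 1 ∧ ‖T x‖ = ‖T‖) :
    ∃ i₀ : ι, ‖T (b i₀)‖ = ‖T‖ ∧ ∀ i, ‖lam i‖ ≤ ‖lam i₀‖ :=
  diagonalizable_norming_attains_at_basis_vector_general T b lam hb hN
end

section
/- If α ≥ 0, K is a positive compact operator, and F is a self-adjoint finite-rank operator on a complex Hilbert space H, then the operator αI + K + F is absolutely norming: its restriction to every nonzero closed subspace attains its norm. -/
/-!
Write `T = α + C` with `C = K + F` compact and `S = T|_M`. The positive operator `A = S† S` has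
`‖A‖ = ‖S‖²` in its spectrum, so whenever `S† S - c` is compact for some `c < ‖S‖²`, the nonzero
spectral value `‖S‖² - c` of `S† S - c` is an eigenvalue (Fredholm alternative) and its eigenvectors
attain the norm of `S`. For finite-dimensional `M` take `c = -1`. Otherwise `M` meets `ker F`, where
positivity of `K` gives `‖T x‖ ≥ α ‖x‖`; so either `‖S‖ ≤ α` and such an `x` attains `‖S‖`, or
`α² < ‖S‖²` and `c = α²` works, since `S† S - α² = P_M (T - α) (T + α)|_M` is compact.
-/

theorem LinearMap.exists_mem_ne_zero_map_eq_zero_of_finiteDimensional_range {K E F : Type*}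
    [Field K] [AddCommGroup E] [Module K E] [AddCommGroup F] [Module K F] (f : E →ₗ[K] F)
    [FiniteDimensional K (LinearMap.range f)] {M : Submodule K E}
    (hM : ¬ FiniteDimensional K M) : ∃ x ∈ M, x ≠ 0 ∧ f x = 0 := by
  by_contra! h
  refine hM (Module.Finite.of_injective (f.rangeRestrict ∘ₗ M.subtype) ?_)
  rw [injective_iff_map_eq_zero]
  intro x hx
  by_contra hx0
  exact h x x.2 (by simpa using hx0) (by simpa using congrArg Subtype.val hx)

namespace ContinuousLinearMap

theorem isCompactOperator_of_finiteDimensional_range {𝕜 E F : Type*} [NontriviallyNormedField 𝕜]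
    [LocallyCompactSpace 𝕜] [NormedAddCommGroup E] [NormedSpace 𝕜 E] [NormedAddCommGroup F]
    [NormedSpace 𝕜 F] (f : E →L[𝕜] F) [FiniteDimensional 𝕜 (LinearMap.range (f : E →ₗ[𝕜] F))] :
    IsCompactOperator f :=
  have : ProperSpace (LinearMap.range (f : E →ₗ[𝕜] F)) := FiniteDimensional.proper 𝕜 _
  (isCompactOperator_of_locallyCompactSpace_dom
    (f.codRestrict _ (LinearMap.mem_range_self (f : E →ₗ[𝕜] F)))).clm_comp
    (LinearMap.range (f : E →ₗ[𝕜] F)).subtypeL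

theorem IsPositive.mul_norm_le_norm_smul_add {𝕜 E : Type*} [RCLike 𝕜] [NormedAddCommGroup E]
    [InnerProductSpace 𝕜 E] {K : E →L[𝕜] E} (hK : K.IsPositive) (α : ℝ) (x : E) :
    α * ‖x‖ ≤ ‖(α : 𝕜) • x + K x‖ := by
  rcases (norm_nonneg x).eq_or_lt with hx | hx
  · rw [← hx, mul_zero]
    exact norm_nonneg _
  refine le_of_mul_le_mul_right ?_ hx
  calc α * ‖x‖ * ‖x‖ ≤ α * ‖x‖ ^ 2 + RCLike.re (inner 𝕜 (K x) x) := by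
        nlinarith [hK.re_inner_nonneg_left x]
    _ = RCLike.re (inner 𝕜 ((α : 𝕜) • x + K x) x) := by
        rw [inner_add_left, inner_smul_real_left, map_add, inner_self_eq_norm_sq_to_K,
          RCLike.smul_re, ← RCLike.ofReal_pow, RCLike.ofReal_re]
    _ ≤ ‖(α : 𝕜) • x + K x‖ * ‖x‖ := re_inner_le_norm _ _

theorem exists_norm_eq_one_norm_apply_eq_opNorm {𝕜 E F : Type*} [RCLike 𝕜]
    [NormedAddCommGroup E] [NormedSpace 𝕜 E] [NormedAddCommGroup F] [NormedSpace 𝕜 F]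
    (S : E →L[𝕜] F) {v : E} (hv : v ≠ 0) (hSv : ‖S v‖ = ‖S‖ * ‖v‖) :
    ∃ z : E, ‖z‖ = 1 ∧ ‖S z‖ = ‖S‖ := by
  have hv' : ‖v‖ ≠ 0 := norm_ne_zero_iff.2 hv
  refine ⟨(‖v‖⁻¹ : 𝕜) • v, ?_, ?_⟩
  · rw [norm_smul, norm_inv, RCLike.norm_ofReal, abs_norm, inv_mul_cancel₀ hv']
  · rw [map_smul, norm_smul, norm_inv, RCLike.norm_ofReal, abs_norm, hSv, mul_left_comm,
      inv_mul_cancel₀ hv', mul_one]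

theorem _root_.IsSelfAdjoint.isCompactOperator_adjoint_comp_self_sub {𝕜 H : Type*} [RCLike 𝕜]
    [NormedAddCommGroup H] [InnerProductSpace 𝕜 H] [CompleteSpace H] {T : H →L[𝕜] H}
    (hT : IsSelfAdjoint T) {a : ℝ} (hTa : IsCompactOperator (T - (a : 𝕜) • (1 : H →L[𝕜] H)))
    (M : Submodule 𝕜 H) [CompleteSpace M] :
    IsCompactOperator (adjoint (T ∘L M.subtypeL) ∘L (T ∘L M.subtypeL)
      - ((a ^ 2 : ℝ) : 𝕜) • (1 : M →L[𝕜] M)) := by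
  have hfactor : adjoint (T ∘L M.subtypeL) ∘L (T ∘L M.subtypeL)
      - ((a ^ 2 : ℝ) : 𝕜) • (1 : M →L[𝕜] M) =
      M.orthogonalProjectionOnto ∘L ((T - (a : 𝕜) • 1) ∘L (T + (a : 𝕜) • 1)) ∘L M.subtypeL := by
    ext x
    simp [adjoint_comp, hT.adjoint_eq, Submodule.adjoint_subtypeL]
    module
  rw [hfactor]
  exact ((hTa.comp_clm (T + (a : 𝕜) • 1)).comp_clm M.subtypeL).clm_comp M.orthogonalProjectionOnto

theorem exists_ne_zero_norm_apply_eq_opNorm_mul_of_isCompactOperator_adjoint_comp_self_sub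
    {V W : Type*} [NormedAddCommGroup V] [InnerProductSpace ℂ V] [CompleteSpace V] [Nontrivial V]
    [NormedAddCommGroup W] [InnerProductSpace ℂ W] [CompleteSpace W]
    (S : V →L[ℂ] W) (c : ℝ) (hc : c < ‖S‖ ^ 2)
    (hS : IsCompactOperator (adjoint S ∘L S - (c : ℂ) • (1 : V →L[ℂ] V))) :
    ∃ z : V, z ≠ 0 ∧ ‖S z‖ = ‖S‖ * ‖z‖ := by
  have hc1 : (c : ℂ) • (1 : V →L[ℂ] V) = algebraMap ℝ (V →L[ℂ] V) c := by
    ext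
    simp [Algebra.algebraMap_eq_smul_one]
  rw [hc1] at hS
  set A := adjoint S ∘L S
  have hA : ‖A‖ ∈ spectrum ℝ A := CStarAlgebra.norm_mem_spectrum_of_nonneg
    ((nonneg_iff_isPositive A).2 (isPositive_adjoint_comp_self S))
  have hAS : ‖A‖ = ‖S‖ ^ 2 := by rw [norm_adjoint_comp_self, sq]
  have hshift : ((‖A‖ - c : ℝ) : ℂ) ∈ spectrum ℂ (A - algebraMap ℝ (V →L[ℂ] V) c) := by
    refine spectrum.algebraMap_mem ℂ (R := ℝ) ?_
    rw [← spectrum.sub_singleton_eq]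
    exact Set.sub_mem_sub hA rfl
  have hne : ((‖A‖ - c : ℝ) : ℂ) ≠ 0 := by
    rw [Complex.ofReal_ne_zero, sub_ne_zero]
    exact (hAS ▸ hc).ne'
  obtain ⟨v, hv⟩ := ((hS.hasEigenvalue_iff_mem_spectrum hne).2 hshift).exists_hasEigenvector
  have hAv : A v = (‖A‖ : ℂ) • v := by
    simpa [Algebra.algebraMap_eq_smul_one, sub_smul, Complex.coe_smul] using hv.apply_eq_smul
  have hSv : ‖S v‖ ^ 2 = (‖S‖ * ‖v‖) ^ 2 := by
    rw [S.apply_norm_sq_eq_inner_adjoint_left v, hAv, inner_smul_left, inner_self_eq_norm_sq_to_K,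
      Complex.conj_ofReal, hAS]
    simp [mul_pow, ← Complex.ofReal_pow]
  exact ⟨v, hv.2, (pow_left_inj₀ (norm_nonneg _) (by positivity) two_ne_zero).1 hSv⟩

theorem _root_.IsSelfAdjoint.exists_ne_zero_norm_apply_eq_opNorm_mul_of_isCompactOperator_sub
    {H : Type*} [NormedAddCommGroup H] [InnerProductSpace ℂ H] [CompleteSpace H] {T : H →L[ℂ] H}
    (hT : IsSelfAdjoint T) {α : ℝ} (hα : 0 ≤ α)
    (hTα : IsCompactOperator (T - (α : ℂ) • (1 : H →L[ℂ] H))) (M : Submodule ℂ H) [CompleteSpace M]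
    {e : M} (he : e ≠ 0) (hTe : α * ‖e‖ ≤ ‖T e‖) :
    ∃ v : M, v ≠ 0 ∧ ‖(T ∘L M.subtypeL) v‖ = ‖T ∘L M.subtypeL‖ * ‖v‖ := by
  set S := T ∘L M.subtypeL
  have : Nontrivial M := ⟨e, 0, he⟩
  by_cases hSα : ‖S‖ ≤ α
  · exact ⟨e, he, le_antisymm (S.le_opNorm e)
      ((mul_le_mul_of_nonneg_right hSα (norm_nonneg _)).trans hTe)⟩
  exact S.exists_ne_zero_norm_apply_eq_opNorm_mul_of_isCompactOperator_adjoint_comp_self_sub (α ^ 2)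
    (pow_lt_pow_left₀ (not_le.1 hSα) hα two_ne_zero)
    (hT.isCompactOperator_adjoint_comp_self_sub hTα M)

end ContinuousLinearMap

theorem alphaI_plus_compact_plus_finiteRank_is_AN {H : Type*}
    [NormedAddCommGroup H] [InnerProductSpace ℂ H] [CompleteSpace H]
    (α : ℝ) (hα : 0 ≤ α) (K F : H →L[ℂ] H)
    (hK : IsCompactOperator K) (hKpos : K.IsPositive)
    (hF : IsSelfAdjoint F) (hFfin : FiniteDimensional ℂ (LinearMap.range (F : H →ₗ[ℂ] H))) :
    ∀ M : Submodule ℂ H, IsClosed (M : Set H) → M ≠ ⊥ →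
      ∃ x : H, x ∈ M ∧ ‖x‖ = 1 ∧
        ‖((α : ℂ) • ContinuousLinearMap.id ℂ H + K + F) x‖ =
          ‖((α : ℂ) • ContinuousLinearMap.id ℂ H + K + F).comp M.subtypeL‖ := by
  intro M hM hM0
  have : CompleteSpace M := hM.completeSpace_coe
  set T := (α : ℂ) • ContinuousLinearMap.id ℂ H + K + F
  set S := T ∘L M.subtypeL
  suffices h : ∃ v : M, v ≠ 0 ∧ ‖S v‖ = ‖S‖ * ‖v‖ by
    obtain ⟨v, hv, hSv⟩ := h
    obtain ⟨z, hz, hSz⟩ := S.exists_norm_eq_one_norm_apply_eq_opNorm hv hSv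
    exact ⟨z, z.2, hz, hSz⟩
  by_cases hfin : FiniteDimensional ℂ M
  · have : Nontrivial M := Submodule.nontrivial_iff_ne_bot.2 hM0
    exact S.exists_ne_zero_norm_apply_eq_opNorm_mul_of_isCompactOperator_adjoint_comp_self_sub
      (-1) (neg_one_lt_zero.trans_le (sq_nonneg _)) (isCompactOperator_of_locallyCompactSpace_rng _)
  obtain ⟨e, heM, he0, hFe⟩ :=
    (F : H →ₗ[ℂ] H).exists_mem_ne_zero_map_eq_zero_of_finiteDimensional_range hfin
  have hTe : T e = (α : ℂ) • e + K e := by simp [T, show F e = 0 from hFe]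
  have hT : IsSelfAdjoint T :=
    ((IsSelfAdjoint.smul (by simp [IsSelfAdjoint]) (.one _)).add hKpos.isSelfAdjoint).add hF
  have hTα : T - (α : ℂ) • (1 : H →L[ℂ] H) = K + F := by
    change (α : ℂ) • (1 : H →L[ℂ] H) + K + F - _ = _
    abel
  refine hT.exists_ne_zero_norm_apply_eq_opNorm_mul_of_isCompactOperator_sub hα ?_ M
    (e := ⟨e, heM⟩) (by simpa using he0) ?_
  · rw [hTα]
    exact hK.add F.isCompactOperator_of_finiteDimensional_range
  · simpa [hTe] using hKpos.mul_norm_le_norm_smul_add α e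
end
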